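/- arXiv:1806.07358 — 4 statements merged into one kernel-verified Lean document; each statement's English description precedes it below -/
import Mathlib

section
/- With γ as defined from a fixed sequence a_1,...,a_n of positive integers, define for n = 2m + r_0 (r_0 ∈ {0,1}, r_1 = 1 - r_0) and indeterminates x, y = x+1 the polynomial p_n(x) = x^{r_0} Σ_{k=0}^{m} (-1)^{m-k} x^k (x+1)^k γ_n(n - 2k - r_0) + x^{r_1} Σ_{k=0}^{m - r_1} (-1)^{m-k} x^k (x+1)^k γ_n(n - 2k - r_1). Then for all n ≥ 4, p_n(x) = (-1)^{n+1} a_n · p_{n-1}(x) + x(x+1) · p_{n-2}(x), where p_{n-1} and p_{n-2} are defined analogously from the truncated sequences a_1,...,a_{n-1} and a_1,...,a_{n-2}. -/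
open Polynomial

/-- `gamma a n l` = Σ over strictly increasing sequences `t : Fin l → {1,...,n}` with
`t i ≡ n + i - l (mod 2)` (1-indexed) of the products `a (t 1) ⋯ a (t l)`. -/
def gamma (a : ℕ → ℤ) (n l : ℕ) : ℤ :=
  ∑ t ∈ Finset.univ.filter (fun t : Fin l → Fin n =>
      (∀ i j : Fin l, i < j → t i < t j) ∧
      (∀ i : Fin l, ((t i : ℕ) + 1 + l) % 2 = (n + ((i : ℕ) + 1)) % 2)),
    ∏ i : Fin l, a ((t i : ℕ) + 1)


lemma gamma_zero (a : ℕ → ℤ) (n : ℕ) : gamma a n 0 = 1 := by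
  simp [gamma]

lemma gamma_of_gt (a : ℕ → ℤ) {n l : ℕ} (h : n < l) : gamma a n l = 0 := by
  unfold gamma
  rw [Finset.filter_eq_empty_iff.2, Finset.sum_empty]
  rintro t - ⟨h1, h2⟩
  have hinj : Function.Injective t := by
    intro i j hij
    rcases lt_trichotomy i j with h' | h' | h'
    · exact absurd hij (h1 i j h').ne
    · exact h'
    · exact absurd hij.symm (h1 j i h').ne
  exact absurd (Fintype.card_le_of_injective t hinj) (by simpa using h.not_ge)

def snocF {n l : ℕ} (s : Fin l → Fin (n+1)) : Fin (l+1) → Fin (n+2) :=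
  Fin.snoc (fun i => Fin.castSucc (s i)) (Fin.last (n+1))

lemma snocF_val {n l : ℕ} (s : Fin l → Fin (n+1)) (i : Fin (l+1)) :
    ((snocF s i : Fin (n+2)) : ℕ) = if h : (i:ℕ) < l then (s ⟨i, h⟩ : ℕ) else n+1 := by
  refine Fin.lastCases ?_ (fun i' => ?_) i
  · simp [snocF]
  · simp only [snocF, Fin.snoc_castSucc, Fin.coe_castSucc, Fin.is_lt, dif_pos]

lemma keyB {n l : ℕ} (t : Fin (l+1) → Fin (n+2))
    (h1 : ∀ i j : Fin (l+1), i < j → t i < t j)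
    (h2 : ∀ i : Fin (l+1), ((t i : ℕ) + 1 + (l+1)) % 2 = ((n+2) + ((i : ℕ) + 1)) % 2)
    (h3 : ¬ t (Fin.last l) = Fin.last (n+1)) (i : Fin (l+1)) : (t i : ℕ) < n := by
  have hpar := h2 (Fin.last l)
  simp only [Fin.val_last] at hpar
  have hne : (t (Fin.last l) : ℕ) ≠ n + 1 := fun h => h3 (Fin.ext (by simpa using h))
  have hle : (t i : ℕ) ≤ (t (Fin.last l) : ℕ) := by
    rcases eq_or_lt_of_le (Fin.le_last i) with h | h
    · rw [h]
    · exact (h1 i (Fin.last l) h).le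
  have hb : (t (Fin.last l) : ℕ) < n + 2 := (t (Fin.last l)).isLt
  omega

lemma gamma_rec (a : ℕ → ℤ) (n l : ℕ) :
    gamma a (n+2) (l+1) = a (n+2) * gamma a (n+1) l + gamma a n (l+1) := by
  unfold gamma
  rw [Finset.mul_sum,
    ← Finset.sum_filter_add_sum_filter_not (Finset.univ.filter _)
      (fun t : Fin (l+1) → Fin (n+2) => t (Fin.last l) = Fin.last (n+1))]
  congr 1
  · -- t (last) = last : corresponds to a (n+2) * gamma a (n+1) l
    refine Finset.sum_bij'
      (i := fun t ht => fun i : Fin l => (⟨min (t (Fin.castSucc i) : ℕ) n, by omega⟩ : Fin (n+1)))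
      (j := fun s hs => snocF s)
      ?_ ?_ ?_ ?_ ?_
    · intro t ht
      simp only [Finset.mem_filter, Finset.mem_univ, true_and] at ht ⊢
      obtain ⟨⟨hmono, hpar⟩, hQ⟩ := ht
      have hbd : ∀ i : Fin l, (t (Fin.castSucc i) : ℕ) < n + 1 := by
        intro i
        have h := hmono _ _ (Fin.castSucc_lt_last i)
        rw [hQ, Fin.lt_def, Fin.val_last] at h
        exact h
      constructor
      · intro i j hij
        have h := hmono _ _ (Fin.castSucc_lt_castSucc_iff.mpr hij)
        rw [Fin.lt_def] at h
        have := hbd i; have := hbd j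
        exact Fin.mk_lt_mk.mpr (by omega)
      · intro i
        have h := hpar (Fin.castSucc i)
        simp only [Fin.coe_castSucc] at h
        have hb := hbd i
        show (min (t (Fin.castSucc i) : ℕ) n + 1 + l) % 2 = ((n+1) + ((i:ℕ)+1)) % 2
        omega
    · intro s hs
      simp only [Finset.mem_filter, Finset.mem_univ, true_and] at hs ⊢
      obtain ⟨hmono, hpar⟩ := hs
      have hmono' : ∀ i j : Fin l, (i:ℕ) < (j:ℕ) → (s i : ℕ) < (s j : ℕ) :=
        fun i j h => hmono i j h
      have hbd : ∀ i : Fin l, (s i : ℕ) < n + 1 := fun i => (s i).isLt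
      refine ⟨⟨?_, ?_⟩, ?_⟩
      · intro i j hij
        rw [Fin.lt_def, snocF_val, snocF_val]
        rw [Fin.lt_def] at hij
        split_ifs with h1 h2 h2
        · exact hmono' _ _ hij
        · exact hbd _
        · omega
        · omega
      · intro i
        rw [snocF_val]
        rcases Nat.lt_or_ge (i:ℕ) l with h | h
        · rw [dif_pos h]
          have hp := hpar ⟨(i:ℕ), h⟩
          have hmk : ((⟨(i:ℕ), h⟩ : Fin l) : ℕ) = (i:ℕ) := rfl
          omega
        · rw [dif_neg (by omega)]
          have := i.isLt
          omega
      · exact Fin.ext (by rw [snocF_val]; simp)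
    · intro t ht
      simp only [Finset.mem_filter, Finset.mem_univ, true_and] at ht
      obtain ⟨⟨hmono, hpar⟩, hQ⟩ := ht
      have hbd : ∀ i : Fin l, (t (Fin.castSucc i) : ℕ) < n + 1 := by
        intro i
        have h := hmono _ _ (Fin.castSucc_lt_last i)
        rw [hQ, Fin.lt_def, Fin.val_last] at h
        exact h
      funext i
      apply Fin.ext
      beta_reduce
      rw [snocF_val]
      rcases Nat.lt_or_ge (i:ℕ) l with h | h
      · rw [dif_pos h]
        have hc : Fin.castSucc (⟨(i:ℕ), h⟩ : Fin l) = i := Fin.ext rfl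
        have hb2 := hbd ⟨(i:ℕ), h⟩
        show min (t (Fin.castSucc ⟨(i:ℕ), h⟩) : ℕ) n = (t i : ℕ)
        rw [hc]
        rw [hc] at hb2
        omega
      · rw [dif_neg (by omega)]
        have hi : i = Fin.last l := Fin.ext (by have := i.isLt; simp only [Fin.val_last]; omega)
        rw [hi, hQ, Fin.val_last]
    · intro s hs
      funext i
      apply Fin.ext
      beta_reduce
      show min ((snocF s (Fin.castSucc i) : Fin (n+2)) : ℕ) n = (s i : ℕ)
      rw [snocF_val]
      rw [dif_pos (by simpa using i.isLt : ((Fin.castSucc i : Fin (l+1)) : ℕ) < l)]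
      have hc : (⟨((Fin.castSucc i : Fin (l+1)) : ℕ), by simpa using i.isLt⟩ : Fin l) = i :=
        Fin.ext rfl
      rw [hc]
      have := (s i).isLt
      omega
    · intro t ht
      simp only [Finset.mem_filter, Finset.mem_univ, true_and] at ht
      obtain ⟨⟨hmono, hpar⟩, hQ⟩ := ht
      have hbd : ∀ i : Fin l, (t (Fin.castSucc i) : ℕ) < n + 1 := by
        intro i
        have h := hmono _ _ (Fin.castSucc_lt_last i)
        rw [hQ, Fin.lt_def, Fin.val_last] at h
        exact h
      rw [Fin.prod_univ_castSucc]
      have hlast : ((t (Fin.last l) : ℕ)) + 1 = n + 2 := by rw [hQ]; simp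
      rw [hlast, mul_comm]
      congr 1
      refine Finset.prod_congr rfl ?_
      intro i _
      have := hbd i
      show a ((t (Fin.castSucc i) : ℕ) + 1) = a (min (t (Fin.castSucc i) : ℕ) n + 1)
      congr 1
      omega
  · -- t (last) ≠ last : corresponds to gamma a n (l+1)
    refine Finset.sum_bij'
      (i := fun t ht => fun i : Fin (l+1) =>
        (⟨(t i : ℕ), by
          simp only [Finset.mem_filter, Finset.mem_univ, true_and] at ht
          exact keyB t ht.1.1 ht.1.2 ht.2 i⟩ : Fin n))
      (j := fun s hs => fun i => Fin.castLE (by omega) (s i))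
      ?_ ?_ ?_ ?_ ?_
    · intro t ht
      simp only [Finset.mem_filter, Finset.mem_univ, true_and] at ht ⊢
      obtain ⟨⟨hmono, hpar⟩, hQ⟩ := ht
      constructor
      · intro i j hij
        have h := hmono i j hij
        rw [Fin.lt_def] at h
        exact Fin.mk_lt_mk.mpr h
      · intro i
        have h := hpar i
        show ((t i : ℕ) + 1 + (l+1)) % 2 = (n + ((i:ℕ)+1)) % 2
        omega
    · intro s hs
      simp only [Finset.mem_filter, Finset.mem_univ, true_and] at hs ⊢
      obtain ⟨hmono, hpar⟩ := hs
      refine ⟨⟨?_, ?_⟩, ?_⟩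
      · intro i j hij
        have h := hmono i j hij
        rw [Fin.lt_def] at h ⊢
        simpa using h
      · intro i
        have h := hpar i
        show ((s i : ℕ) + 1 + (l+1)) % 2 = ((n+2) + ((i:ℕ)+1)) % 2
        omega
      · intro h
        have h2 : ((s (Fin.last l) : ℕ)) = n + 1 := by
          have := congrArg Fin.val h
          simpa using this
        have := (s (Fin.last l)).isLt
        omega
    · intro t ht
      funext i
      exact Fin.ext (by simp)
    · intro s hs
      funext i
      exact Fin.ext (by simp)
    · intro t ht
      exact Finset.prod_congr rfl (fun i _ => by simp)

/-- The polynomial `p_n(x) = x^{r₀} Σ_{k=0}^m (-1)^{m-k} x^k (x+1)^k γ_n(n-2k-r₀)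
+ x^{r₁} Σ_{k=0}^{m-r₁} (-1)^{m-k} x^k (x+1)^k γ_n(n-2k-r₁)`, where `n = 2m + r₀`,
`r₀ ∈ {0,1}` and `r₁ = 1 - r₀`. -/
noncomputable def pPoly (a : ℕ → ℤ) (n : ℕ) : Polynomial ℤ :=
  X ^ (n % 2) *
    ∑ k ∈ Finset.range (n / 2 + 1),
      (-1) ^ (n / 2 - k) * X ^ k * (X + 1) ^ k * C (gamma a n (n - 2 * k - n % 2)) +
  X ^ (1 - n % 2) *
    ∑ k ∈ Finset.range (n / 2 - (1 - n % 2) + 1),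
      (-1) ^ (n / 2 - k) * X ^ k * (X + 1) ^ k * C (gamma a n (n - 2 * k - (1 - n % 2)))

noncomputable def Spoly (a : ℕ → ℤ) (n m r : ℕ) : Polynomial ℤ :=
  ∑ k ∈ Finset.range (m+1),
    (-1) ^ (m - k) * X ^ k * (X + 1) ^ k * C (gamma a n (n - 2 * k - r))

lemma gamma_split (a : ℕ → ℤ) {n L : ℕ} (h1 : 1 ≤ L) (h3 : 2 ≤ n) :
    gamma a n L = a n * gamma a (n-1) (L-1) + gamma a (n-2) L := by
  have h := gamma_rec a (n-2) (L-1)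
  rw [show n-2+2 = n by omega, show n-2+1 = n-1 by omega, show L-1+1 = L by omega] at h
  exact h

lemma S2 (a : ℕ → ℤ) (n m r : ℕ) (hr : r ≤ 1) (hn : 2*m+3+r ≤ n) :
    Spoly a n (m+1) r
      = C (a n) * Spoly a (n-1) (m+1) r + X*(X+1) * Spoly a (n-2) m r := by
  unfold Spoly
  have hsplit : ∀ k ∈ Finset.range (m+2),
      (-1 : Polynomial ℤ)^(m+1-k) * X^k * (X+1)^k * C (gamma a n (n - 2*k - r))
      = C (a n) * ((-1)^(m+1-k) * X^k * (X+1)^k * C (gamma a (n-1) ((n-1) - 2*k - r)))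
        + (-1)^(m+1-k) * X^k * (X+1)^k * C (gamma a (n-2) (n - 2*k - r)) := by
    intro k hk
    rw [Finset.mem_range] at hk
    rw [gamma_split a (by omega) (by omega),
      show n - 2*k - r - 1 = (n-1) - 2*k - r by omega, C_add, C_mul]
    ring
  rw [Finset.sum_congr rfl hsplit, Finset.sum_add_distrib, ← Finset.mul_sum]
  congr 1
  rw [Finset.sum_range_succ']
  rw [show n - 2*0 - r = n - r by omega, gamma_of_gt a (show n - 2 < n - r by omega), C_0,
    mul_zero, add_zero]
  rw [Finset.mul_sum]
  refine Finset.sum_congr rfl ?_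
  intro i hi
  rw [Finset.mem_range] at hi
  rw [show m+1-(i+1) = m - i by omega, show n - 2*(i+1) - r = (n-2) - 2*i - r by omega]
  ring

lemma S1 (a : ℕ → ℤ) (n m r : ℕ) (hr : r ≤ 1) (hn : n = 2*m+2+r) :
    Spoly a n (m+1) r
      = -(C (a n) * Spoly a (n-1) m r) + X*(X+1) * Spoly a (n-2) m r := by
  unfold Spoly
  rw [Finset.sum_range_succ]
  rw [show n - 2*(m+1) - r = 0 by omega, gamma_zero, C_1, mul_one, Nat.sub_self, pow_zero,
    one_mul]
  have hsplit : ∀ k ∈ Finset.range (m+1),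
      (-1 : Polynomial ℤ)^(m+1-k) * X^k * (X+1)^k * C (gamma a n (n - 2*k - r))
      = -(C (a n) * ((-1)^(m-k) * X^k * (X+1)^k * C (gamma a (n-1) ((n-1) - 2*k - r))))
        + (-1)^(m+1-k) * X^k * (X+1)^k * C (gamma a (n-2) (n - 2*k - r)) := by
    intro k hk
    rw [Finset.mem_range] at hk
    rw [gamma_split a (by omega) (by omega),
      show n - 2*k - r - 1 = (n-1) - 2*k - r by omega, C_add, C_mul,
      show m+1-k = (m-k)+1 by omega, pow_succ]
    ring
  rw [Finset.sum_congr rfl hsplit, Finset.sum_add_distrib]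
  have h1 : ∑ k ∈ Finset.range (m+1),
      -(C (a n) * ((-1 : Polynomial ℤ)^(m-k) * X^k * (X+1)^k
        * C (gamma a (n-1) ((n-1) - 2*k - r))))
      = -(C (a n) * ∑ k ∈ Finset.range (m+1),
          (-1 : Polynomial ℤ)^(m-k) * X^k * (X+1)^k * C (gamma a (n-1) ((n-1) - 2*k - r))) := by
    rw [Finset.mul_sum, Finset.sum_neg_distrib]
  have h2 : ∑ k ∈ Finset.range (m+1),
      (-1 : Polynomial ℤ)^(m+1-k) * X^k * (X+1)^k * C (gamma a (n-2) (n - 2*k - r))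
      = X*(X+1) * ((∑ k ∈ Finset.range (m+1),
          (-1 : Polynomial ℤ)^(m-k) * X^k * (X+1)^k * C (gamma a (n-2) ((n-2) - 2*k - r)))
        - X^m * (X+1)^m) := by
    rw [Finset.sum_range_succ']
    rw [show n - 2*0 - r = n - r by omega, gamma_of_gt a (show n - 2 < n - r by omega), C_0,
      mul_zero, add_zero]
    rw [Finset.sum_range_succ (fun k => (-1 : Polynomial ℤ)^(m-k) * X^k * (X+1)^k
      * C (gamma a (n-2) ((n-2) - 2*k - r)))]
    rw [show (n-2) - 2*m - r = 0 by omega, gamma_zero, C_1, mul_one, Nat.sub_self, pow_zero,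
      one_mul]
    rw [add_sub_cancel_right, Finset.mul_sum]
    refine Finset.sum_congr rfl ?_
    intro i hi
    rw [Finset.mem_range] at hi
    rw [show m+1-(i+1) = m - i by omega, show n - 2*(i+1) - r = (n-2) - 2*i - r by omega]
    ring
  rw [h1, h2]
  ring

lemma pPoly_even (a : ℕ → ℤ) (n m : ℕ) (h : n = 2*m+2) :
    pPoly a n = Spoly a n (m+1) 0 - X * Spoly a n m 1 := by
  subst h
  unfold pPoly Spoly
  rw [show (2*m+2) % 2 = 0 by omega, show (2*m+2) / 2 = m+1 by omega]
  simp only [pow_zero, pow_one, one_mul, Nat.sub_zero, Nat.add_sub_cancel]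
  have h2 : ∑ k ∈ Finset.range (m+1),
      (-1 : Polynomial ℤ)^(m+1-k) * X^k * (X+1)^k * C (gamma a (2*m+2) (2*m+2 - 2*k - 1))
      = -∑ k ∈ Finset.range (m+1),
        (-1 : Polynomial ℤ)^(m-k) * X^k * (X+1)^k * C (gamma a (2*m+2) (2*m+2 - 2*k - 1)) := by
    rw [← Finset.sum_neg_distrib]
    refine Finset.sum_congr rfl ?_
    intro k hk
    rw [Finset.mem_range] at hk
    rw [show m+1-k = (m-k)+1 by omega, pow_succ]
    ring
  rw [h2]
  ring

lemma pPoly_odd (a : ℕ → ℤ) (n m : ℕ) (h : n = 2*m+1) :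
    pPoly a n = X * Spoly a n m 1 + Spoly a n m 0 := by
  subst h
  unfold pPoly Spoly
  rw [show (2*m+1) % 2 = 1 by omega, show (2*m+1) / 2 = m by omega]
  simp only [pow_zero, pow_one, one_mul, Nat.sub_zero, Nat.sub_self]

theorem stmt1 (a : ℕ → ℤ) (ha : ∀ i, 0 < a i) (n : ℕ) (hn : 4 ≤ n) :
    pPoly a n = (-1) ^ (n + 1) * C (a n) * pPoly a (n - 1) + X * (X + 1) * pPoly a (n - 2) := by
  obtain ⟨m, hm⟩ : ∃ m, n = 2*m + 4 ∨ n = 2*m + 5 := ⟨(n-4)/2, by omega⟩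
  rcases hm with rfl | rfl
  · -- n even
    rw [show 2*m+4-1 = 2*m+3 by omega, show 2*m+4-2 = 2*m+2 by omega]
    rw [pPoly_even a (2*m+4) (m+1) (by ring), pPoly_odd a (2*m+3) (m+1) (by ring),
      pPoly_even a (2*m+2) m (by ring)]
    rw [S1 a (2*m+4) (m+1) 0 (by omega) (by ring)]
    rw [S2 a (2*m+4) m 1 (by omega) (by omega)]
    rw [show ((-1 : Polynomial ℤ)) ^ (2*m+4+1) = -1 from Odd.neg_one_pow ⟨m+2, by ring⟩]
    rw [show 2*m+4-1 = 2*m+3 by omega, show 2*m+4-2 = 2*m+2 by omega]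
    ring
  · -- n odd
    rw [show 2*m+5-1 = 2*m+4 by omega, show 2*m+5-2 = 2*m+3 by omega]
    rw [pPoly_odd a (2*m+5) (m+2) (by ring), pPoly_even a (2*m+4) (m+1) (by ring),
      pPoly_odd a (2*m+3) (m+1) (by ring)]
    rw [S1 a (2*m+5) (m+1) 1 (by omega) (by ring)]
    rw [S2 a (2*m+5) (m+1) 0 (by omega) (by omega)]
    rw [show ((-1 : Polynomial ℤ)) ^ (2*m+5+1) = 1 from Even.neg_one_pow ⟨m+3, by ring⟩]
    rw [show 2*m+5-1 = 2*m+4 by omega, show 2*m+5-2 = 2*m+3 by omega]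
    ring
end

section
/- Let G = (0^{a_1} 1^{a_2} ... 0^{a_{n-1}} 1^{a_n}) be a connected threshold graph with each a_i a positive integer (n even). Then the multiplicity of the eigenvalue 0 of the adjacency matrix of G equals Σ_{i=1}^{n/2} (a_{2i-1} - 1). -/
/-- Threshold graph built from a creation word `b`: vertex `j` was added as a dominating
vertex iff `b j = true`; two vertices are adjacent iff the later one is dominating. -/
def thresholdGraph {N : ℕ} (b : Fin N → Bool) : SimpleGraph (Fin N) where
  Adj i j := ((i : ℕ) < j ∧ b j = true) ∨ ((j : ℕ) < i ∧ b i = true)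
  symm := ⟨by intro i j h; tauto⟩
  loopless := ⟨by intro i h; rcases h with ⟨h, -⟩ | ⟨h, -⟩ <;> exact absurd h (lt_irrefl _)⟩

instance {N : ℕ} (b : Fin N → Bool) : DecidableRel (thresholdGraph b).Adj := fun i j =>
  inferInstanceAs (Decidable (((i : ℕ) < j ∧ b j = true) ∨ ((j : ℕ) < i ∧ b i = true)))

/-- Number of vertices in the first `m` blocks: `S a m = a 1 + ⋯ + a m`. -/
def S (a : ℕ → ℕ) (m : ℕ) : ℕ := ∑ i ∈ Finset.range m, a (i + 1)

/-- The creation word of the threshold graph `(0^{a 1} 1^{a 2} ⋯ 0^{a (n-1)} 1^{a n})`: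
vertex `k` (0-indexed) is dominating iff it lies in an even (1-indexed) block. -/
def bword (a : ℕ → ℕ) (k : ℕ) : Bool :=
  decide (∃ j, j < k + 1 ∧ S a j ≤ k ∧ k < S a (j + 1) ∧ (j + 1) % 2 = 0)

/-- The connected threshold graph `(0^{a 1} 1^{a 2} ⋯ 0^{a (n-1)} 1^{a n})` on
`S a n = a 1 + ⋯ + a n` vertices. -/
def blockGraph (a : ℕ → ℕ) (n : ℕ) : SimpleGraph (Fin (S a n)) :=
  thresholdGraph (fun v => bword a (v : ℕ))

instance (a : ℕ → ℕ) (n : ℕ) : DecidableRel (blockGraph a n).Adj := fun i j =>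
  inferInstanceAs
    (Decidable (((i : ℕ) < j ∧ bword a j = true) ∨ ((j : ℕ) < i ∧ bword a i = true)))


namespace TAux

variable {a : ℕ → ℕ}

lemma S_succ (a : ℕ → ℕ) (m : ℕ) : S a (m + 1) = S a m + a (m + 1) :=
  Finset.sum_range_succ _ _

lemma S_zero (a : ℕ → ℕ) : S a 0 = 0 := rfl

lemma S_strictMono (hpos : ∀ i, 1 ≤ a i) : StrictMono (S a) :=
  strictMono_nat_of_lt_succ (fun m => by
    rw [S_succ]; have := hpos (m + 1); omega)

lemma le_S (hpos : ∀ i, 1 ≤ a i) (m : ℕ) : m ≤ S a m := by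
  induction m with
  | zero => simp [S_zero]
  | succ m ih => rw [S_succ]; have := hpos (m + 1); omega

lemma bword_eq (hpos : ∀ i, 1 ≤ a i) {j k : ℕ} (h1 : S a j ≤ k) (h2 : k < S a (j + 1)) :
    bword a k = decide (j % 2 = 1) := by
  have hmono := S_strictMono hpos
  rcases eq_or_ne (j % 2) 1 with hj | hj
  · have : bword a k = true := by
      rw [bword, decide_eq_true_iff]
      exact ⟨j, by have := le_S hpos j; omega, h1, h2, by omega⟩
    rw [this, hj]; simp
  · have : bword a k = false := by
      rw [bword]
      simp only [decide_eq_false_iff_not]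
      rintro ⟨j', -, h1', h2', hj'⟩
      have : j = j' := by
        by_contra hne
        rcases Nat.lt_or_ge j j' with h | h
        · have := hmono.monotone (show j + 1 ≤ j' from h); omega
        · have hlt : j' < j := by omega
          have := hmono.monotone (show j' + 1 ≤ j from hlt); omega
      omega
    rw [this, eq_comm, decide_eq_false_iff_not]
    exact hj

lemma exists_block (hpos : ∀ i, 1 ≤ a i) {k m : ℕ} (hk : k < S a m) :
    ∃ j, j < m ∧ S a j ≤ k ∧ k < S a (j + 1) := by
  induction m with
  | zero => simp [S_zero] at hk
  | succ m ih =>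
    rcases Nat.lt_or_ge k (S a m) with h | h
    · obtain ⟨j, hj, h1, h2⟩ := ih h
      exact ⟨j, by omega, h1, h2⟩
    · exact ⟨m, by omega, h, hk⟩

/-- counting dominating vertices -/
lemma count_dom (hpos : ∀ i, 1 ≤ a i) (m : ℕ) :
    (∑ k ∈ Finset.range (S a m), if bword a k then 1 else 0) =
      ∑ j ∈ Finset.range m, if j % 2 = 1 then a (j + 1) else 0 := by
  induction m with
  | zero => simp [S_zero]
  | succ m ih =>
    rw [Finset.sum_range_succ, ← ih, S_succ]
    have hsplit : (∑ k ∈ Finset.range (S a m + a (m + 1)), if bword a k then 1 else 0)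
        = (∑ k ∈ Finset.range (S a m), if bword a k then 1 else 0)
          + ∑ k ∈ Finset.Ico (S a m) (S a m + a (m + 1)), (if bword a k then 1 else 0) := by
      rw [Finset.range_eq_Ico]
      rw [Finset.range_eq_Ico]
      exact (Finset.sum_Ico_consecutive (fun k => if bword a k = true then (1 : ℕ) else 0) (Nat.zero_le _) (Nat.le_add_right _ _)).symm
    rw [hsplit]
    congr 1
    have : ∀ k ∈ Finset.Ico (S a m) (S a m + a (m + 1)),
        (if bword a k then 1 else 0) = if m % 2 = 1 then 1 else 0 := by
      intro k hk
      simp only [Finset.mem_Ico] at hk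
      rw [bword_eq hpos hk.1 (by rw [S_succ]; omega)]
      split_ifs with h1 h2 h2 <;> simp_all
    rw [Finset.sum_congr rfl this, Finset.sum_const, Nat.card_Ico]
    split_ifs <;> simp

section Sums

variable {N : ℕ} (a : ℕ → ℕ)

/-- extension of `x` by zero to all of `ℕ` -/
def yext (x : Fin N → ℚ) (k : ℕ) : ℚ := if h : k < N then x ⟨k, h⟩ else 0

def Psum (x : Fin N → ℚ) (m : ℕ) : ℚ :=
  ∑ k ∈ Finset.range N, if k < m then yext x k else 0

def Tge (x : Fin N → ℚ) (m : ℕ) : ℚ :=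
  ∑ k ∈ Finset.range N, if m ≤ k ∧ bword a k = true then yext x k else 0

variable (x : Fin N → ℚ)

lemma yext_lt (x : Fin N → ℚ) {k : ℕ} (h : k < N) : yext x k = x ⟨k, h⟩ := dif_pos h

lemma yext_ge (x : Fin N → ℚ) {k : ℕ} (h : N ≤ k) : yext x k = 0 := dif_neg (by omega)

lemma Psum_zero : Psum x 0 = 0 := by
  simp [Psum]

lemma Psum_succ (m : ℕ) : Psum x (m + 1) = Psum x m + yext x m := by
  have hpt : ∀ k ∈ Finset.range N, (if k < m + 1 then yext x k else 0)
      = (if k < m then yext x k else 0) + (if k = m then yext x k else 0) := by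
    intro k _
    rcases eq_or_ne k m with rfl | hne
    · simp
    · split_ifs <;> simp_all <;> omega
  rw [Psum, Finset.sum_congr rfl hpt, Finset.sum_add_distrib, Finset.sum_ite_eq']
  rcases Nat.lt_or_ge m N with h | h
  · simp [Psum, Finset.mem_range.mpr h]
  · simp [Psum, Finset.mem_range, Nat.not_lt.mpr h, yext_ge x h]

lemma sum_ite_between {f : ℕ → ℚ} {m1 m2 : ℕ} (h1 : m1 ≤ m2) (h2 : m2 ≤ N) :
    (∑ k ∈ Finset.range N, if m1 ≤ k ∧ k < m2 then f k else 0)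
      = ∑ k ∈ Finset.Ico m1 m2, f k := by
  rw [← Finset.sum_filter]
  congr 1
  ext k
  simp only [Finset.mem_filter, Finset.mem_range, Finset.mem_Ico]
  omega

lemma Psum_split {m1 m2 : ℕ} (h1 : m1 ≤ m2) (h2 : m2 ≤ N) :
    Psum x m2 = Psum x m1 + ∑ k ∈ Finset.Ico m1 m2, yext x k := by
  rw [← sum_ite_between (f := yext x) h1 h2]
  rw [Psum, Psum, ← Finset.sum_add_distrib]
  refine Finset.sum_congr rfl fun k _ => ?_
  split_ifs <;> simp_all <;> omega

lemma Tge_ge {m : ℕ} (h : N ≤ m) : Tge a x m = 0 := by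
  refine Finset.sum_eq_zero fun k hk => ?_
  rw [if_neg]
  rintro ⟨h1, -⟩
  simp only [Finset.mem_range] at hk
  omega

lemma Tge_succ (m : ℕ) :
    Tge a x m = (if bword a m then yext x m else 0) + Tge a x (m + 1) := by
  have hpt : ∀ k ∈ Finset.range N, (if m ≤ k ∧ bword a k = true then yext x k else 0)
      = (if k = m then (if bword a m then yext x k else 0) else 0)
        + (if m + 1 ≤ k ∧ bword a k = true then yext x k else 0) := by
    intro k _
    rcases eq_or_ne k m with rfl | hne
    · split_ifs <;> simp_all <;> omega
    · split_ifs <;> simp_all <;> omega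
  rw [Tge, Finset.sum_congr rfl hpt, Finset.sum_add_distrib, Finset.sum_ite_eq']
  rcases Nat.lt_or_ge m N with h | h
  · simp only [Finset.mem_range.mpr h, if_pos]
    rfl
  · simp [Finset.mem_range, Nat.not_lt.mpr h, yext_ge x h, Tge]

lemma Tge_split {m1 m2 : ℕ} (h1 : m1 ≤ m2) (h2 : m2 ≤ N) :
    Tge a x m1 = Tge a x m2
      + ∑ k ∈ Finset.Ico m1 m2, (if bword a k then yext x k else 0) := by
  rw [← sum_ite_between (f := fun k => if bword a k then yext x k else 0) h1 h2]
  rw [Tge, Tge, ← Finset.sum_add_distrib]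
  refine Finset.sum_congr rfl fun k _ => ?_
  split_ifs <;> simp_all <;> omega

lemma Tge_eq_zero (hdom : ∀ k (h : k < N), bword a k = true → x ⟨k, h⟩ = 0) (m : ℕ) :
    Tge a x m = 0 := by
  refine Finset.sum_eq_zero fun k hk => ?_
  simp only [Finset.mem_range] at hk
  split_ifs with h
  · rw [yext_lt x hk, hdom k hk h.2]
  · rfl

end Sums

section Graph

variable (a : ℕ → ℕ) (n : ℕ)

lemma mulVec_apply (x : Fin (S a n) → ℚ) (i : Fin (S a n)) :
    ((blockGraph a n).adjMatrix ℚ).mulVec x i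
      = Tge a x ((i : ℕ) + 1) + (if bword a (i : ℕ) then Psum x (i : ℕ) else 0) := by
  rw [SimpleGraph.adjMatrix_mulVec_apply]
  have h1 : (blockGraph a n).neighborFinset i
      = Finset.univ.filter (fun j => (blockGraph a n).Adj i j) := by
    ext j; simp [SimpleGraph.mem_neighborFinset]
  rw [h1, Finset.sum_filter]
  have h2 : ∀ j : Fin (S a n), (if (blockGraph a n).Adj i j then x j else 0)
      = (fun k : ℕ => if (((i : ℕ) < k ∧ bword a k = true) ∨ (k < (i : ℕ) ∧ bword a (i : ℕ) = true))
          then yext x k else 0) (j : ℕ) := by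
    intro j
    have hA : (blockGraph a n).Adj i j ↔
        (((i : ℕ) < (j : ℕ) ∧ bword a (j : ℕ) = true)
          ∨ ((j : ℕ) < (i : ℕ) ∧ bword a (i : ℕ) = true)) := Iff.rfl
    simp only []
    rw [if_congr hA rfl rfl, yext_lt x j.isLt]
  have key : (∑ j : Fin (S a n), if (blockGraph a n).Adj i j then x j else 0)
      = ∑ k ∈ Finset.range (S a n),
          if (((i : ℕ) < k ∧ bword a k = true) ∨ (k < (i : ℕ) ∧ bword a (i : ℕ) = true))
            then yext x k else 0 := by
    rw [← Fin.sum_univ_eq_sum_range (fun k : ℕ =>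
      if (((i : ℕ) < k ∧ bword a k = true) ∨ (k < (i : ℕ) ∧ bword a (i : ℕ) = true))
        then yext x k else 0)]
    exact Finset.sum_congr rfl (fun j _ => h2 j)
  rw [key]
  rcases Bool.eq_false_or_eq_true (bword a (i : ℕ)) with hbi | hbi
  · rw [hbi, if_pos rfl]
    have hpt : ∀ k ∈ Finset.range (S a n),
        (if (((i : ℕ) < k ∧ bword a k = true) ∨ (k < (i : ℕ) ∧ true = true))
          then yext x k else 0)
        = (if (i : ℕ) + 1 ≤ k ∧ bword a k = true then yext x k else 0)
          + (if k < (i : ℕ) then yext x k else 0) := by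
      intro k _
      split_ifs <;> simp_all <;> omega
    rw [Finset.sum_congr rfl hpt, Finset.sum_add_distrib]
    rfl
  · rw [hbi, if_neg (by simp), add_zero, Tge]
    refine Finset.sum_congr rfl fun k _ => ?_
    split_ifs <;> simp_all <;> omega

section Forward

variable {a n}
variable (hpos : ∀ i, 1 ≤ a i) {x : Fin (S a n) → ℚ}
variable (hx : ∀ i : Fin (S a n),
    Tge a x ((i : ℕ) + 1) + (if bword a (i : ℕ) then Psum x (i : ℕ) else 0) = 0)

include hx

lemma F1 {m : ℕ} (hm : m < S a n) (hb : bword a m = false) : Tge a x (m + 1) = 0 := by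
  have := hx ⟨m, hm⟩
  simp only [hb] at this
  simpa using this

lemma F2 {m : ℕ} (hm : m < S a n) (hb : bword a m = false) : Tge a x m = 0 := by
  rw [Tge_succ, F1 hx hm hb, hb]
  simp

lemma F3 {m : ℕ} (hm : m < S a n) (hb : bword a m = true) :
    Tge a x (m + 1) + Psum x m = 0 := by
  have := hx ⟨m, hm⟩
  simp only [hb, if_pos] at this
  simpa using this

include hpos

lemma blockTge1 {t : ℕ} (ht : 2 * t + 1 ≤ n) : Tge a x (S a (2 * t + 1)) = 0 := by
  have hlt : S a (2 * t) < S a (2 * t + 1) := S_strictMono hpos (by omega)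
  have hle : S a (2 * t + 1) ≤ S a n := (S_strictMono hpos).monotone ht
  set m := S a (2 * t + 1) - 1 with hm
  have h1 : S a (2 * t) ≤ m := by omega
  have h2 : m < S a (2 * t + 1) := by omega
  have hb : bword a m = false := by
    rw [bword_eq hpos h1 h2]
    simp [Nat.mul_mod_right]
  have hmN : m < S a n := by omega
  have := F1 hx hmN hb
  have hh : m + 1 = S a (2 * t + 1) := by omega
  rwa [hh] at this

lemma blockTge2 {t : ℕ} (ht : 2 * t + 2 ≤ n) : Tge a x (S a (2 * t + 2)) = 0 := by
  rcases eq_or_lt_of_le ht with heq | hlt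
  · rw [heq]
    exact Tge_ge a x le_rfl
  · have hlt2 : S a (2 * t + 2) < S a (2 * t + 3) := S_strictMono hpos (by omega)
    have hle : S a (2 * t + 3) ≤ S a n := (S_strictMono hpos).monotone (by omega)
    have hb : bword a (S a (2 * t + 2)) = false := by
      rw [bword_eq hpos le_rfl hlt2]
      simp [Nat.mul_mod_right, Nat.add_mod]
    exact F2 hx (by omega) hb

lemma blockSum {t : ℕ} (ht : 2 * t + 2 ≤ n) :
    ∑ k ∈ Finset.Ico (S a (2 * t + 1)) (S a (2 * t + 2)), yext x k = 0 := by
  have hle : S a (2 * t + 1) ≤ S a (2 * t + 2) := (S_strictMono hpos).monotone (by omega)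
  have hleN : S a (2 * t + 2) ≤ S a n := (S_strictMono hpos).monotone ht
  have hsplit := Tge_split a x hle hleN
  have hcongr : ∀ k ∈ Finset.Ico (S a (2 * t + 1)) (S a (2 * t + 2)),
      (if bword a k then yext x k else 0) = yext x k := by
    intro k hk
    simp only [Finset.mem_Ico] at hk
    rw [if_pos]
    rw [bword_eq hpos hk.1 hk.2]
    simp [Nat.mul_mod_right, Nat.add_mod]
  rw [Finset.sum_congr rfl hcongr] at hsplit
  rw [blockTge1 hpos hx (by omega), blockTge2 hpos hx ht] at hsplit
  linarith

lemma stepB {m : ℕ} (hm : m + 1 < S a n) (hb1 : bword a m = true)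
    (hb2 : bword a (m + 1) = true) : yext x (m + 1) = yext x m := by
  have e1 := F3 hx (by omega) hb1
  have e2 := F3 hx hm hb2
  have e3 := Tge_succ a x (m + 1)
  rw [hb2, if_pos rfl] at e3
  have e4 := Psum_succ x m
  linarith

lemma blockConst {t : ℕ} (ht : 2 * t + 2 ≤ n) :
    ∀ d, S a (2 * t + 1) + d < S a (2 * t + 2) →
      yext x (S a (2 * t + 1) + d) = yext x (S a (2 * t + 1)) := by
  intro d
  induction d with
  | zero => intro _; rfl
  | succ d ih =>
    intro hd
    have hleN : S a (2 * t + 2) ≤ S a n := (S_strictMono hpos).monotone ht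
    have h22 : 2 * t + 1 + 1 = 2 * t + 2 := by omega
    have hmod : (2 * t + 1) % 2 = 1 := by omega
    have hb1 : bword a (S a (2 * t + 1) + d) = true := by
      have e1 : S a (2 * t + 1) ≤ S a (2 * t + 1) + d := by omega
      have e2 : S a (2 * t + 1) + d < S a (2 * t + 1 + 1) := by rw [h22]; omega
      rw [bword_eq hpos e1 e2]
      simp [hmod]
    have hb2 : bword a (S a (2 * t + 1) + d + 1) = true := by
      have e1 : S a (2 * t + 1) ≤ S a (2 * t + 1) + d + 1 := by omega
      have e2 : S a (2 * t + 1) + d + 1 < S a (2 * t + 1 + 1) := by rw [h22]; omega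
      rw [bword_eq hpos e1 e2]
      simp [hmod]
    have := stepB hpos hx (m := S a (2 * t + 1) + d) (by omega) hb1 hb2
    rw [show S a (2 * t + 1) + (d + 1) = S a (2 * t + 1) + d + 1 by omega, this]
    exact ih (by omega)

lemma blockDomZero {t : ℕ} (ht : 2 * t + 2 ≤ n) :
    ∀ k, S a (2 * t + 1) ≤ k → k < S a (2 * t + 2) → yext x k = 0 := by
  have hsum := blockSum hpos hx ht
  have hconst : ∀ k ∈ Finset.Ico (S a (2 * t + 1)) (S a (2 * t + 2)),
      yext x k = yext x (S a (2 * t + 1)) := by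
    intro k hk
    simp only [Finset.mem_Ico] at hk
    obtain ⟨d, rfl⟩ := Nat.exists_eq_add_of_le hk.1
    exact blockConst hpos hx ht d hk.2
  rw [Finset.sum_congr rfl hconst, Finset.sum_const, Nat.card_Ico] at hsum
  have hcard : S a (2 * t + 2) - S a (2 * t + 1) = a (2 * t + 2) := by
    rw [show 2 * t + 2 = 2 * t + 1 + 1 by omega, S_succ]; omega
  rw [hcard] at hsum
  have ha : (a (2 * t + 2) : ℚ) ≠ 0 := by
    have := hpos (2 * t + 2); positivity
  have hzero : yext x (S a (2 * t + 1)) = 0 := by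
    rw [nsmul_eq_mul] at hsum
    rcases mul_eq_zero.mp hsum with h | h
    · exact absurd h ha
    · exact h
  intro k hk1 hk2
  obtain ⟨d, rfl⟩ := Nat.exists_eq_add_of_le hk1
  rw [blockConst hpos hx ht d hk2, hzero]

lemma domZero {k : ℕ} (hk : k < S a n) (hb : bword a k = true) : yext x k = 0 := by
  obtain ⟨j, hj, h1, h2⟩ := exists_block hpos hk
  have hodd : j % 2 = 1 := by
    rw [bword_eq hpos h1 h2] at hb
    simpa using hb
  obtain ⟨t, rfl⟩ : ∃ t, j = 2 * t + 1 := ⟨j / 2, by omega⟩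
  exact blockDomZero hpos hx (by omega) k h1 h2

lemma TgeZero (m : ℕ) : Tge a x m = 0 := by
  refine Tge_eq_zero a x (fun k hk hb => ?_) m
  have := domZero hpos hx hk hb
  rwa [yext_lt x hk] at this

lemma PsumZero {k : ℕ} (hk : k < S a n) (hb : bword a k = true) : Psum x k = 0 := by
  have := F3 hx hk hb
  rw [TgeZero hpos hx] at this
  linarith

end Forward

section Backward

variable {a n}
variable (hpos : ∀ i, 1 ≤ a i) {x : Fin (S a n) → ℚ}
variable (hdom : ∀ k (h : k < S a n), bword a k = true → x ⟨k, h⟩ = 0)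

include hpos hdom

lemma ydomZero {k : ℕ} (hb : bword a k = true) : yext x k = 0 := by
  rcases Nat.lt_or_ge k (S a n) with h | h
  · rw [yext_lt x h]; exact hdom k h hb
  · exact yext_ge x h

lemma backward (hP : ∀ t, 2 * t + 1 < n → Psum x (S a (2 * t + 1)) = 0) :
    ∀ i : Fin (S a n),
      Tge a x ((i : ℕ) + 1) + (if bword a (i : ℕ) then Psum x (i : ℕ) else 0) = 0 := by
  intro i
  have hT : Tge a x ((i : ℕ) + 1) = 0 :=
    Tge_eq_zero a x (fun k hk hb => by
      have := ydomZero hpos hdom hb; rwa [yext_lt x hk] at this) _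
  rw [hT, zero_add]
  split_ifs with hb
  · obtain ⟨j, hj, h1, h2⟩ := exists_block hpos i.isLt
    have hodd : j % 2 = 1 := by
      rw [bword_eq hpos h1 h2] at hb
      simpa using hb
    obtain ⟨t, rfl⟩ : ∃ t, j = 2 * t + 1 := ⟨j / 2, by omega⟩
    have hsplit := Psum_split x h1 (Nat.le_of_lt i.isLt)
    rw [hsplit, hP t (by omega)]
    rw [Finset.sum_eq_zero, add_zero]
    intro k hk
    simp only [Finset.mem_Ico] at hk
    refine ydomZero hpos hdom ?_
    rw [bword_eq hpos hk.1 (by omega)]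
    simp [Nat.mul_mod_right, Nat.add_mod]
  · rfl

end Backward

end Graph

section LMap

variable (a : ℕ → ℕ) (n : ℕ)

lemma yext_add {N : ℕ} (x y : Fin N → ℚ) (k : ℕ) :
    yext (x + y) k = yext x k + yext y k := by
  unfold yext; split <;> simp

lemma yext_smul {N : ℕ} (c : ℚ) (x : Fin N → ℚ) (k : ℕ) :
    yext (c • x) k = c * yext x k := by
  unfold yext; split <;> simp

lemma Psum_add {N : ℕ} (x y : Fin N → ℚ) (m : ℕ) :
    Psum (x + y) m = Psum x m + Psum y m := by
  unfold Psum
  rw [← Finset.sum_add_distrib]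
  refine Finset.sum_congr rfl fun k _ => ?_
  rw [yext_add]
  split_ifs <;> simp

lemma Psum_smul {N : ℕ} (c : ℚ) (x : Fin N → ℚ) (m : ℕ) :
    Psum (c • x) m = c * Psum x m := by
  unfold Psum
  rw [Finset.mul_sum]
  refine Finset.sum_congr rfl fun k _ => ?_
  rw [yext_smul]
  split_ifs <;> simp

def PsumLin (m : ℕ) : (Fin (S a n) → ℚ) →ₗ[ℚ] ℚ where
  toFun x := Psum x m
  map_add' x y := Psum_add x y m
  map_smul' c x := by rw [RingHom.id_apply]; exact Psum_smul c x m

def Lmap : (Fin (S a n) → ℚ) →ₗ[ℚ]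
    ({i : Fin (S a n) // bword a (i : ℕ) = true} → ℚ) × (Fin (n / 2) → ℚ) :=
  LinearMap.prod (LinearMap.pi fun d => LinearMap.proj d.1)
    (LinearMap.pi fun t : Fin (n / 2) => PsumLin a n (S a (2 * (t : ℕ) + 1)))

variable {a n}

lemma mem_ker_iff (x : Fin (S a n) → ℚ) :
    ((blockGraph a n).adjMatrix ℚ).mulVecLin x = 0 ↔
      ∀ i : Fin (S a n),
        Tge a x ((i : ℕ) + 1) + (if bword a (i : ℕ) then Psum x (i : ℕ) else 0) = 0 := by
  constructor
  · intro h i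
    have := congrFun h i
    rw [Matrix.mulVecLin_apply, mulVec_apply] at this
    simpa using this
  · intro h
    funext i
    rw [Matrix.mulVecLin_apply, mulVec_apply]
    simpa using h i

lemma bword_odd_block (hpos : ∀ i, 1 ≤ a i) {t : ℕ} (ht : 2 * t + 1 ≤ n) :
    bword a (S a (2 * t)) = false := by
  have h2 : S a (2 * t) < S a (2 * t + 1) := S_strictMono hpos (by omega)
  rw [bword_eq hpos le_rfl h2]
  simp [Nat.mul_mod_right]

lemma bword_even_block (hpos : ∀ i, 1 ≤ a i) {t : ℕ} (ht : 2 * t + 2 ≤ n) :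
    bword a (S a (2 * t + 1)) = true := by
  have h2 : S a (2 * t + 1) < S a (2 * t + 1 + 1) := S_strictMono hpos (by omega)
  rw [bword_eq hpos le_rfl h2]
  have : (2 * t + 1) % 2 = 1 := by omega
  simp [this]

lemma ker_eq (hpos : ∀ i, 1 ≤ a i) (heven : n % 2 = 0) :
    LinearMap.ker ((blockGraph a n).adjMatrix ℚ).mulVecLin = LinearMap.ker (Lmap a n) := by
  ext x
  simp only [LinearMap.mem_ker]
  rw [mem_ker_iff]
  constructor
  · intro hx
    have hdom : ∀ (k : ℕ) (h : k < S a n), bword a k = true → x ⟨k, h⟩ = 0 := by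
      intro k h hb
      have := domZero hpos hx h hb
      rwa [yext_lt x h] at this
    refine Prod.ext ?_ ?_
    · funext d
      simp only [Lmap, LinearMap.prod_apply, LinearMap.pi_apply, LinearMap.proj_apply,
        Pi.zero_apply, Prod.fst]
      have := hdom (d.1 : ℕ) d.1.isLt d.2
      simpa using this
    · funext t
      simp only [Lmap, LinearMap.prod_apply, LinearMap.pi_apply, Pi.zero_apply, Prod.snd]
      show Psum x (S a (2 * (t : ℕ) + 1)) = 0
      have ht : 2 * (t : ℕ) + 2 ≤ n := by have := t.isLt; omega
      have hk : S a (2 * (t : ℕ) + 1) < S a n := S_strictMono hpos (by omega)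
      exact PsumZero hpos hx hk (bword_even_block hpos ht)
  · intro hL
    have h1 := congrArg Prod.fst hL
    have h2 := congrArg Prod.snd hL
    simp only [Lmap, LinearMap.prod_apply, Prod.fst, Prod.snd] at h1 h2
    have hdom : ∀ (k : ℕ) (h : k < S a n), bword a k = true → x ⟨k, h⟩ = 0 := by
      intro k h hb
      exact congrFun h1 ⟨⟨k, h⟩, hb⟩
    have hP : ∀ t, 2 * t + 1 < n → Psum x (S a (2 * t + 1)) = 0 := by
      intro t ht
      have ht2 : t < n / 2 := by omega
      exact congrFun h2 ⟨t, ht2⟩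
    exact backward hpos hdom hP

lemma Psum_bump {N : ℕ} (w : ℕ) (hw : w < N) (c : ℚ) (m : ℕ) :
    Psum (fun v : Fin N => if (v : ℕ) = w then c else 0) m
      = if w < m then c else 0 := by
  rw [Psum]
  have hpt : ∀ k ∈ Finset.range N,
      (if k < m then yext (fun v : Fin N => if (v : ℕ) = w then c else 0) k else 0)
        = if k = w then (if w < m then c else 0) else 0 := by
    intro k hk
    simp only [Finset.mem_range] at hk
    rw [yext_lt _ hk]
    simp only []
    split_ifs <;> simp_all
  rw [Finset.sum_congr rfl hpt, Finset.sum_ite_eq' (Finset.range N) w]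
  rw [if_pos (Finset.mem_range.mpr hw)]

lemma Lmap_surjective (hpos : ∀ i, 1 ≤ a i) (heven : n % 2 = 0) :
    Function.Surjective (Lmap a n) := by
  rintro ⟨f, g⟩
  classical
  set x1 : Fin (S a n) → ℚ := fun v => if h : bword a (v : ℕ) = true then f ⟨v, h⟩ else 0 with hx1
  set g' : ℕ → ℚ := fun t => if h : t < n / 2 then g ⟨t, h⟩ - Psum x1 (S a (2 * t + 1)) else 0
    with hg'
  set h' : ℕ → ℚ := fun t => g' t - (if t = 0 then 0 else g' (t - 1)) with hh'
  set bump : ℕ → Fin (S a n) → ℚ :=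
    fun t v => if (v : ℕ) = S a (2 * t) then h' t else 0 with hbump
  refine ⟨x1 + ∑ t ∈ Finset.range (n / 2), bump t, ?_⟩
  have hSlt : ∀ t, t < n / 2 → S a (2 * t) < S a n := by
    intro t ht
    have h2 : 2 * t < n := by omega
    exact S_strictMono hpos h2
  have hbumpdom : ∀ t ∈ Finset.range (n / 2), ∀ (d : Fin (S a n)),
      bword a (d : ℕ) = true → bump t d = 0 := by
    intro t ht d hb
    simp only [Finset.mem_range] at ht
    rw [hbump]
    simp only []
    rw [if_neg]
    intro hEq
    rw [hEq] at hb
    have hot : 2 * t + 1 ≤ n := by omega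
    rw [bword_odd_block hpos hot] at hb
    exact Bool.false_ne_true hb
  refine Prod.ext ?_ ?_
  · funext d
    simp only [Lmap, LinearMap.prod_apply, LinearMap.pi_apply, LinearMap.proj_apply, Prod.fst]
    show x1 d.1 + (∑ t ∈ Finset.range (n / 2), bump t) d.1 = f d
    rw [Finset.sum_apply]
    rw [Finset.sum_eq_zero (fun t ht => hbumpdom t ht d.1 d.2), add_zero]
    rw [hx1]
    simp only [d.2, dif_pos]
  · funext s
    simp only [Lmap, LinearMap.prod_apply, LinearMap.pi_apply, Prod.snd]
    show (PsumLin a n (S a (2 * (s : ℕ) + 1))) (x1 + ∑ t ∈ Finset.range (n / 2), bump t) = g s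
    rw [map_add, map_sum]
    have hbumpsum : ∀ t ∈ Finset.range (n / 2),
        (PsumLin a n (S a (2 * (s : ℕ) + 1))) (bump t)
          = if t ≤ (s : ℕ) then h' t else 0 := by
      intro t ht
      simp only [Finset.mem_range] at ht
      show Psum (bump t) (S a (2 * (s : ℕ) + 1)) = _
      rw [hbump]
      rw [Psum_bump (S a (2 * t)) (hSlt t ht)]
      congr 1
      simp only [eq_iff_iff]
      rw [(S_strictMono hpos).lt_iff_lt]
      omega
    rw [Finset.sum_congr rfl hbumpsum]
    have hfilter : ∑ t ∈ Finset.range (n / 2), (if t ≤ (s : ℕ) then h' t else 0)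
        = ∑ t ∈ Finset.range ((s : ℕ) + 1), h' t := by
      rw [← Finset.sum_filter]
      congr 1
      ext t
      simp only [Finset.mem_filter, Finset.mem_range]
      have := s.isLt
      omega
    have htel : ∀ u, ∑ t ∈ Finset.range (u + 1), h' t = g' u := by
      intro u
      induction u with
      | zero => simp [hh']
      | succ u ih =>
        rw [Finset.sum_range_succ, ih, hh']
        simp only []
        rw [if_neg (by omega)]
        simp
    rw [hfilter, htel (s : ℕ), hg']
    simp only [s.isLt, dif_pos]
    show (PsumLin a n (S a (2 * (s : ℕ) + 1))) x1 + (g ⟨(s : ℕ), s.isLt⟩ - Psum x1 (S a (2 * (s : ℕ) + 1))) = g s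
    show Psum x1 (S a (2 * (s : ℕ) + 1)) + (g ⟨(s : ℕ), s.isLt⟩ - Psum x1 (S a (2 * (s : ℕ) + 1))) = g s
    rw [Fin.eta]
    ring

end LMap

lemma sum_range_two_mul (f : ℕ → ℕ) (m : ℕ) :
    ∑ j ∈ Finset.range (2 * m), f j = ∑ i ∈ Finset.range m, (f (2 * i) + f (2 * i + 1)) := by
  induction m with
  | zero => simp
  | succ m ih =>
    rw [show 2 * (m + 1) = 2 * m + 1 + 1 by omega, Finset.sum_range_succ, Finset.sum_range_succ,
      ih, Finset.sum_range_succ]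
    omega

end TAux

open TAux in
theorem stmt5 (a : ℕ → ℕ) (n : ℕ) (hn : 0 < n) (heven : n % 2 = 0)
    (hpos : ∀ i, 1 ≤ a i) :
    Module.finrank ℚ (LinearMap.ker ((blockGraph a n).adjMatrix ℚ).mulVecLin) =
      ∑ i ∈ Finset.range (n / 2), (a (2 * i + 1) - 1) := by
  classical
  rw [ker_eq hpos heven]
  have hrn := LinearMap.finrank_range_add_finrank_ker (Lmap a n)
  have hrange : LinearMap.range (Lmap a n) = ⊤ :=
    LinearMap.range_eq_top.mpr (Lmap_surjective hpos heven)
  have hV : Module.finrank ℚ (Fin (S a n) → ℚ) = S a n := by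
    rw [Module.finrank_pi, Fintype.card_fin]
  have hcod : Module.finrank ℚ
        ((({i : Fin (S a n) // bword a (i : ℕ) = true} → ℚ) × (Fin (n / 2) → ℚ)))
      = Fintype.card {i : Fin (S a n) // bword a (i : ℕ) = true} + n / 2 := by
    rw [Module.finrank_prod, Module.finrank_pi, Module.finrank_pi, Fintype.card_fin]
  have hcard : Fintype.card {i : Fin (S a n) // bword a (i : ℕ) = true}
      = ∑ j ∈ Finset.range n, if j % 2 = 1 then a (j + 1) else 0 := by
    rw [Fintype.card_subtype, Finset.card_filter,
      show (∑ i : Fin (S a n), if bword a (i : ℕ) = true then 1 else 0)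
        = ∑ k ∈ Finset.range (S a n), (if bword a k = true then 1 else 0) from
        Fin.sum_univ_eq_sum_range (fun k => if bword a k = true then 1 else 0) (S a n)]
    exact count_dom hpos n
  have e1 : Module.finrank ℚ ↥(LinearMap.range (Lmap a n))
      = (∑ j ∈ Finset.range n, if j % 2 = 1 then a (j + 1) else 0) + n / 2 := by
    rw [hrange, finrank_top, hcod, hcard]
  have h2 : n = 2 * (n / 2) := by omega
  have hN : S a n = ∑ i ∈ Finset.range (n / 2), (a (2 * i + 1) + a (2 * i + 2)) := by
    have hSn : S a n = S a (2 * (n / 2)) := by rw [← h2]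
    rw [hSn, S, sum_range_two_mul]
  have hD : (∑ j ∈ Finset.range n, if j % 2 = 1 then a (j + 1) else 0)
      = ∑ i ∈ Finset.range (n / 2), a (2 * i + 2) := by
    have hSn : (∑ j ∈ Finset.range n, if j % 2 = 1 then a (j + 1) else 0)
        = ∑ j ∈ Finset.range (2 * (n / 2)), if j % 2 = 1 then a (j + 1) else 0 := by
      rw [← h2]
    rw [hSn, sum_range_two_mul]
    refine Finset.sum_congr rfl fun i _ => ?_
    rw [if_neg (by omega), if_pos (by omega), zero_add,
      show 2 * i + 1 + 1 = 2 * i + 2 by omega]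
  have hodd : (∑ i ∈ Finset.range (n / 2), (a (2 * i + 1) - 1)) + n / 2
      = ∑ i ∈ Finset.range (n / 2), a (2 * i + 1) := by
    have : ∑ i ∈ Finset.range (n / 2), a (2 * i + 1)
        = ∑ i ∈ Finset.range (n / 2), ((a (2 * i + 1) - 1) + 1) := by
      refine Finset.sum_congr rfl fun i _ => ?_
      have := hpos (2 * i + 1)
      omega
    rw [this, Finset.sum_add_distrib, Finset.sum_const, Finset.card_range, smul_eq_mul, mul_one]
  have hsplit2 : ∑ i ∈ Finset.range (n / 2), (a (2 * i + 1) + a (2 * i + 2))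
      = (∑ i ∈ Finset.range (n / 2), a (2 * i + 1))
        + ∑ i ∈ Finset.range (n / 2), a (2 * i + 2) := Finset.sum_add_distrib
  rw [hV] at hrn
  omega
end

section
/- Let G = (0^{a_1} 1^{a_2} ... 0^{a_{n-1}} 1^{a_n}) be a connected threshold graph with each a_i a positive integer. Then the multiplicity of the eigenvalue -1 of the adjacency matrix of G equals Σ_{i=1}^{n/2} (a_{2i} - 1) if a_1 > 1, and equals 1 + Σ_{i=1}^{n/2} (a_{2i} - 1) if a_1 = 1. -/
namespace ThrAux
variable {N : ℕ}

noncomputable def Mx (N : ℕ) (b : ℕ → Bool) : Matrix (Fin N) (Fin N) ℚ :=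
  (thresholdGraph (fun v : Fin N => b (v : ℕ))).adjMatrix ℚ + 1

lemma Mx_apply (b : ℕ → Bool) (v u : Fin N) :
    Mx N b v u = (if (((v:ℕ) < u ∧ b u = true) ∨ ((u:ℕ) < v ∧ b v = true)) then 1 else 0)
      + (if (v:ℕ) = (u:ℕ) then 1 else 0) := by
  simp [Mx, Matrix.one_apply, thresholdGraph, SimpleGraph.adjMatrix, Fin.ext_iff]

def extv (x : Fin N → ℚ) : ℕ → ℚ := fun v => if h : v < N then x ⟨v, h⟩ else 0

def Tl (N : ℕ) (b : ℕ → Bool) (y : ℕ → ℚ) (t : ℕ) : ℚ :=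
  ∑ u ∈ Finset.Ico t N, if b u then y u else 0

def Hd (y : ℕ → ℚ) (t : ℕ) : ℚ := ∑ u ∈ Finset.range t, y u

lemma Tl_ge {b y} {t : ℕ} (h : N ≤ t) : Tl N b y t = 0 := by
  rw [Tl, Finset.Ico_eq_empty (by omega)]; simp

lemma Tl_succ {b y} {t : ℕ} (h : t < N) :
    Tl N b y t = (if b t then y t else 0) + Tl N b y (t+1) :=
  Finset.sum_eq_sum_Ico_succ_bot h _

lemma Tl_congr {b y} {t t' : ℕ} (h1 : t ≤ t') (h2 : t' ≤ N)
    (hb : ∀ u, t ≤ u → u < t' → b u = false) : Tl N b y t = Tl N b y t' := by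
  rw [Tl, Tl, ← Finset.sum_Ico_consecutive _ h1 h2]
  have : ∑ u ∈ Finset.Ico t t', (if b u then y u else 0) = 0 := by
    apply Finset.sum_eq_zero
    intro u hu
    rw [Finset.mem_Ico] at hu
    simp [hb u hu.1 hu.2]
  rw [this, zero_add]

lemma Hd_split {y : ℕ → ℚ} {w v : ℕ} (h : w ≤ v) :
    Hd y v = Hd y w + ∑ u ∈ Finset.Ico w v, y u := by
  rw [Hd, Hd, Finset.range_eq_Ico, Finset.range_eq_Ico]
  exact (Finset.sum_Ico_consecutive (f := y) (Nat.zero_le w) h).symm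

lemma key_eq (b : ℕ → Bool) (x : Fin N → ℚ)
    (hx : (Mx N b).mulVec x = 0) {v : ℕ} (hv : v < N) :
    extv x v + (if b v then Hd (extv x) v else 0) + Tl N b (extv x) (v+1) = 0 := by
  have h1 : ∑ u : Fin N, Mx N b ⟨v, hv⟩ u * x u = 0 := by
    simpa [Matrix.mulVec, dotProduct] using congrFun hx ⟨v, hv⟩
  set y := extv x with hy
  set F : ℕ → ℚ := fun u =>
    ((if ((v < u ∧ b u = true) ∨ (u < v ∧ b v = true)) then 1 else 0)
      + (if v = u then (1:ℚ) else 0)) * y u with hF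
  have h2 : ∑ u ∈ Finset.range N, F u = 0 := by
    rw [← Fin.sum_univ_eq_sum_range]
    rw [← h1]
    apply Finset.sum_congr rfl
    intro u _
    rw [Mx_apply, hF]
    have : y (u:ℕ) = x u := by simp [hy, extv, u.isLt]
    simp [this]
  have hsplit : ∑ u ∈ Finset.Ico 0 v, F u + ∑ u ∈ Finset.Ico v N, F u
      = ∑ u ∈ Finset.range N, F u := by
    rw [Finset.range_eq_Ico]
    exact Finset.sum_Ico_consecutive _ (Nat.zero_le v) (le_of_lt hv)
  have hbot : ∑ u ∈ Finset.Ico v N, F u = F v + ∑ u ∈ Finset.Ico (v+1) N, F u :=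
    Finset.sum_eq_sum_Ico_succ_bot hv _
  have hp1 : ∑ u ∈ Finset.Ico 0 v, F u = (if b v then Hd y v else 0) := by
    have : ∀ u ∈ Finset.Ico 0 v, F u = (if b v then y u else 0) := by
      intro u hu
      rw [Finset.mem_Ico] at hu
      have h3 : ¬ (v < u ∧ b u = true) := by omega
      have h4 : v ≠ u := by omega
      by_cases hb : b v = true <;> simp [hF, h3, h4, hb, hu.2]
    rw [Finset.sum_congr rfl this, ← Finset.range_eq_Ico]
    split_ifs with hb
    · rfl
    · exact Finset.sum_const_zero
  have hp2 : F v = y v := by simp [hF]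
  have hp3 : ∑ u ∈ Finset.Ico (v+1) N, F u = Tl N b y (v+1) := by
    apply Finset.sum_congr rfl
    intro u hu
    rw [Finset.mem_Ico] at hu
    have h3 : v < u := by omega
    have h4 : ¬ (u < v ∧ b v = true) := by omega
    have h5 : v ≠ u := by omega
    by_cases hb : b u = true <;> simp [hF, h3, h4, h5, hb]
  rw [hbot, hp1, hp2, hp3] at hsplit
  rw [h2] at hsplit
  linarith



lemma uniq (b : ℕ → Bool) (x : Fin N → ℚ) (hx : (Mx N b).mulVec x = 0)
    (hK : ∀ (w : ℕ) (hw : w < N), 0 < w → b w = true → (b (w-1) = true ∨ w = 1) →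
      x ⟨w, hw⟩ = 0) :
    x = 0 := by
  set y := extv x with hy
  have hy0 : ∀ v, N ≤ v → y v = 0 := by
    intro v hv; simp [hy, extv, Nat.not_lt.mpr hv]
  have E : ∀ v, v < N → y v + (if b v then Hd y v else 0) + Tl N b y (v+1) = 0 :=
    fun v hv => key_eq b x hx hv
  have hKy : ∀ w, w < N → 0 < w → b w = true → (b (w-1) = true ∨ w = 1) → y w = 0 := by
    intro w hw h1 h2 h3
    have := hK w hw h1 h2 h3
    simp [hy, extv, hw, this]
  by_cases hex : ∃ s, s < N ∧ b s = true
  case neg =>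
    push_neg at hex
    have hT : ∀ t, Tl N b y t = 0 := by
      intro t
      apply Finset.sum_eq_zero
      intro u hu
      rw [Finset.mem_Ico] at hu
      simp [hex u hu.2]
    funext v
    have hbv : b v.val = false := by
      have := hex v.val v.isLt; revert this; cases b v.val <;> simp
    have h := E v.val v.isLt
    rw [hT, hbv] at h
    simp at h
    have : y v.val = x v := by simp [hy, extv, v.isLt]
    rw [this] at h
    simpa using h
  case pos =>
    classical
    obtain ⟨s, hsN, hbs⟩ := hex
    -- replace s by the minimal one
    have hmin : ∃ s, b s = true := ⟨s, hbs⟩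
    set s₀ := Nat.find hmin with hs₀
    have hbs₀ : b s₀ = true := Nat.find_spec hmin
    have hs₀min : ∀ u, u < s₀ → b u = false := by
      intro u hu
      have := Nat.find_min hmin hu
      simpa using this
    have hs₀N : s₀ < N := by
      have : s₀ ≤ s := Nat.find_min' hmin hbs
      omega
    -- Claim C : tails vanish above s₀
    have hC : ∀ t v, s₀ < v → N - v ≤ t → Tl N b y v = 0 := by
      intro t
      induction t with
      | zero => intro v hv hle; exact Tl_ge (by omega)
      | succ t ih =>
        intro v hsv hle
        by_cases hvN : v < N
        case neg => exact Tl_ge (by omega)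
        case pos =>
        have hT1 : Tl N b y (v+1) = 0 := ih (v+1) (by omega) (by omega)
        rw [Tl_succ hvN, hT1, add_zero]
        by_cases hbv : b v = true
        case neg => simp [hbv]
        case pos =>
        rw [if_pos hbv]
        by_cases htw : b (v-1) = true ∨ v = 1
        case pos => exact hKy v hvN (by omega) hbv htw
        case neg =>
        push_neg at htw
        obtain ⟨hbv1, hv1⟩ := htw
        have hbv1' : b (v-1) = false := by
          revert hbv1; cases b (v-1) <;> simp
        have hv2 : 2 ≤ v := by omega
        set w := Nat.findGreatest (fun u => b u = true) (v-1) with hw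
        have hbw : b w = true := Nat.findGreatest_spec (P := fun u => b u = true) (by omega : s₀ ≤ v-1) hbs₀
        have hwle : w ≤ v - 1 := Nat.findGreatest_le _
        have hwv1 : w ≠ v - 1 := by
          intro h; rw [h, hbv1'] at hbw; exact absurd hbw (by simp)
        have hwlt : w + 1 < v := by omega
        have hmax : ∀ u, w < u → u < v → b u = false := by
          intro u hu1 hu2
          have h := Nat.findGreatest_is_greatest (P := fun u => b u = true) (n := v-1) hu1 (by omega : u ≤ v - 1)
          exact Bool.eq_false_iff.mpr (by simpa using h)
        have hTveq : ∀ u, w < u → u ≤ v → Tl N b y u = Tl N b y v := by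
          intro u h1 h2
          exact Tl_congr h2 (by omega) (fun z hz1 hz2 => hmax z (by omega) hz2)
        have hTv : Tl N b y v = y v := by
          rw [Tl_succ hvN, hT1, add_zero, if_pos hbv]
        have Ev := E v hvN
        rw [if_pos hbv, hT1, add_zero] at Ev
        have EvH : Hd y v = - y v := by linarith
        have hwN : w < N := by omega
        have Ew := E w hwN
        rw [if_pos hbw] at Ew
        have hTw1 : Tl N b y (w+1) = y v := by
          rw [hTveq (w+1) (by omega) (by omega), hTv]
        rw [hTw1] at Ew
        have EwH : Hd y w = - y w - y v := by linarith
        have hmid : ∀ u ∈ Finset.Ico (w+1) v, y u = - y v := by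
          intro u hu
          rw [Finset.mem_Ico] at hu
          have huN : u < N := by omega
          have Eu := E u huN
          rw [hmax u (by omega) (by omega)] at Eu
          simp only [Bool.false_eq_true, if_false, add_zero] at Eu
          have hTu1 : Tl N b y (u+1) = y v := by
            rw [hTveq (u+1) (by omega) (by omega), hTv]
          rw [hTu1] at Eu
          linarith
        have hsum : ∑ u ∈ Finset.Ico (w+1) v, y u = - ((v - (w+1) : ℕ) : ℚ) * y v := by
          rw [Finset.sum_congr rfl hmid, Finset.sum_const, Nat.card_Ico, nsmul_eq_mul]
          ring
        have hHd : Hd y v = Hd y w + y w + ∑ u ∈ Finset.Ico (w+1) v, y u := by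
          rw [Hd_split (show w ≤ v by omega),
            Finset.sum_eq_sum_Ico_succ_bot (show w < v by omega)]
          ring
        rw [EvH, EwH, hsum] at hHd
        have hcount : ((v - (w+1) : ℕ) : ℚ) ≠ 0 := by
          have : v - (w+1) ≠ 0 := by omega
          exact_mod_cast this
        have : ((v - (w+1) : ℕ) : ℚ) * y v = 0 := by linarith
        exact (mul_eq_zero.mp this).resolve_left hcount
    have hTall : ∀ v, s₀ < v → Tl N b y v = 0 := fun v h => hC (N - v) v h le_rfl
    have hyv : ∀ v, s₀ < v → y v = 0 := by
      intro v hv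
      by_cases hvN : v < N
      case neg => exact hy0 v (by omega)
      case pos =>
      have h1 := hTall v hv
      have h2 := hTall (v+1) (by omega)
      rw [Tl_succ hvN, h2, add_zero] at h1
      by_cases hbv : b v = true
      · simpa [hbv] using h1
      · have Ev := E v hvN
        rw [h2] at Ev
        simp only [hbv, if_false, add_zero] at Ev
        simpa using Ev
    have hyu : ∀ u, u < s₀ → y u = - y s₀ := by
      intro u hu
      have hbu : b u = false := hs₀min u hu
      have Eu := E u (by omega)
      rw [hbu] at Eu
      simp only [Bool.false_eq_true, if_false, add_zero] at Eu
      have hTu : Tl N b y (u+1) = y s₀ := by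
        rw [Tl_congr (show u+1 ≤ s₀ by omega) (by omega)
          (fun z hz1 hz2 => hs₀min z hz2)]
        rw [Tl_succ hs₀N, if_pos hbs₀, hTall (s₀+1) (by omega), add_zero]
      rw [hTu] at Eu
      linarith
    have hys : y s₀ = 0 := by
      by_cases hs1 : s₀ = 1
      · exact hKy s₀ hs₀N (by omega) hbs₀ (Or.inr hs1)
      · have Es := E s₀ hs₀N
        rw [if_pos hbs₀, hTall (s₀+1) (by omega)] at Es
        have hHds : Hd y s₀ = - (s₀ : ℚ) * y s₀ := by
          rw [Hd, Finset.sum_congr rfl (fun u hu => hyu u (Finset.mem_range.mp hu)),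
            Finset.sum_const, Finset.card_range, nsmul_eq_mul]
          ring
        rw [hHds] at Es
        have hfact : (1 - (s₀ : ℚ)) * y s₀ = 0 := by ring_nf; ring_nf at Es; linarith
        have hne : (1 - (s₀ : ℚ)) ≠ 0 := by
          intro h
          have : (s₀ : ℚ) = 1 := by linarith
          have : s₀ = 1 := by exact_mod_cast this
          exact hs1 this
        exact (mul_eq_zero.mp hfact).resolve_left hne
    funext v
    have hv : y v.val = 0 := by
      rcases lt_trichotomy v.val s₀ with h | h | h
      · rw [hyu v.val h, hys]; ring
      · rw [h]; exact hys
      · exact hyv v.val h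
    have : y v.val = x v := by simp [hy, extv, v.isLt]
    rw [this] at hv
    simpa using hv

def Kset (N : ℕ) (b : ℕ → Bool) : Finset (Fin N) :=
  Finset.univ.filter (fun w : Fin N =>
    0 < (w:ℕ) ∧ b (w:ℕ) = true ∧ (b ((w:ℕ)-1) = true ∨ (w:ℕ) = 1))

lemma mem_Kset {b : ℕ → Bool} {w : Fin N} :
    w ∈ Kset N b ↔ 0 < (w:ℕ) ∧ b (w:ℕ) = true ∧ (b ((w:ℕ)-1) = true ∨ (w:ℕ) = 1) := by
  simp [Kset]

/-- predecessor inside `Fin N` -/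
def predF (w : Fin N) : Fin N := ⟨(w:ℕ) - 1, by omega⟩

lemma col_eq {b : ℕ → Bool} {w : Fin N} (hw : w ∈ Kset N b) (r : Fin N) :
    Mx N b r (predF w) = Mx N b r w := by
  obtain ⟨h0, hbw, hdisj⟩ := mem_Kset.mp hw
  rw [Mx_apply, Mx_apply]
  set R := (r : ℕ)
  set W := (w : ℕ)
  have hp : ((predF w : Fin N) : ℕ) = W - 1 := rfl
  rw [hp]
  have hbp : W = 1 ∨ b (W - 1) = true := by tauto
  rcases Nat.lt_trichotomy R (W - 1) with h | h | h
  · have hb1 : b (W-1) = true := by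
      rcases hbp with h1 | h1
      · omega
      · exact h1
    have c1 : (R < W - 1 ∧ b (W-1) = true) ∨ (W - 1 < R ∧ b R = true) := Or.inl ⟨h, hb1⟩
    have c2 : (R < W ∧ b W = true) ∨ (W < R ∧ b R = true) := Or.inl ⟨by omega, hbw⟩
    rw [if_pos c1, if_pos c2, if_neg (by omega : ¬ R = W - 1), if_neg (by omega : ¬ R = W)]
  · have c1 : ¬ ((R < W - 1 ∧ b (W-1) = true) ∨ (W - 1 < R ∧ b R = true)) := by
      rintro (⟨h1, -⟩ | ⟨h1, -⟩) <;> omega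
    have c2 : (R < W ∧ b W = true) ∨ (W < R ∧ b R = true) := Or.inl ⟨by omega, hbw⟩
    rw [if_neg c1, if_pos c2, if_pos h, if_neg (by omega : ¬ R = W)]; ring
  · rcases Nat.lt_trichotomy R W with h' | h' | h'
    · omega
    · have c1 : (R < W - 1 ∧ b (W-1) = true) ∨ (W - 1 < R ∧ b R = true) :=
        Or.inr ⟨by omega, by rw [h']; exact hbw⟩
      have c2 : ¬ ((R < W ∧ b W = true) ∨ (W < R ∧ b R = true)) := by
        rintro (⟨h1, -⟩ | ⟨h1, -⟩) <;> omega
      rw [if_pos c1, if_neg c2, if_neg (by omega : ¬ R = W - 1), if_pos h']; ring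
    · have e1 : ((R < W - 1 ∧ b (W-1) = true) ∨ (W - 1 < R ∧ b R = true))
          ↔ ((R < W ∧ b W = true) ∨ (W < R ∧ b R = true)) := by
        constructor
        · rintro (⟨h1, -⟩ | ⟨h1, h2⟩)
          · omega
          · exact Or.inr ⟨h', h2⟩
        · rintro (⟨h1, -⟩ | ⟨h1, h2⟩)
          · omega
          · exact Or.inr ⟨by omega, h2⟩
      rw [if_congr e1 rfl rfl, if_neg (by omega : ¬ R = W - 1), if_neg (by omega : ¬ R = W)]

/-- twin difference vectors -/
def twv (b : ℕ → Bool) (w : {z : Fin N // z ∈ Kset N b}) : Fin N → ℚ :=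
  Pi.single (predF (w : Fin N)) 1 - Pi.single (w : Fin N) 1

lemma twv_ker (b : ℕ → Bool) (w : {z : Fin N // z ∈ Kset N b}) :
    (Mx N b).mulVec (twv b w) = 0 := by
  rw [twv, Matrix.mulVec_sub, Matrix.mulVec_single, Matrix.mulVec_single]
  funext r
  simp [col_eq w.2 r]

lemma twv_li (b : ℕ → Bool) : LinearIndependent ℚ (twv (N := N) b) := by
  rw [Fintype.linearIndependent_iff]
  intro g hg
  have aux : ∀ t (w : {z : Fin N // z ∈ Kset N b}), N - ((w : Fin N) : ℕ) ≤ t → g w = 0 := by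
    intro t
    induction t with
    | zero =>
      intro w hw
      exact absurd hw (by have := (w : Fin N).isLt; omega)
    | succ t ih =>
      intro w hw
      have h0 : ∑ w' : {z : Fin N // z ∈ Kset N b}, g w' * (twv b w' (w : Fin N)) = 0 := by
        have := congrFun hg (w : Fin N)
        simpa [Finset.sum_apply] using this
      have hval : ∀ w' : {z : Fin N // z ∈ Kset N b},
          g w' * (twv b w' (w : Fin N)) =
            (if ((w' : Fin N) : ℕ) = ((w : Fin N) : ℕ) + 1 then g w' else 0)
            - (if w' = w then g w' else 0) := by
        intro w'
        have hw'pos : 0 < ((w' : Fin N) : ℕ) := (mem_Kset.mp w'.2).1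
        rw [twv]
        simp only [Pi.sub_apply, Pi.single_apply]
        have e1 : ((w : Fin N) = predF (w' : Fin N)) ↔ (((w' : Fin N) : ℕ) = ((w : Fin N) : ℕ) + 1) := by
          rw [Fin.ext_iff]
          show ((w : Fin N) : ℕ) = ((w' : Fin N) : ℕ) - 1 ↔ _
          omega
        have e2 : ((w : Fin N) = (w' : Fin N)) ↔ (w' = w) := by
          rw [Fin.ext_iff]
          constructor
          · intro h; exact Subtype.ext (Fin.ext h.symm)
          · intro h; rw [h]
        rw [if_congr e1 rfl rfl, if_congr e2 rfl rfl]
        split_ifs <;> ring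
      rw [Finset.sum_congr rfl (fun w' _ => hval w'), Finset.sum_sub_distrib] at h0
      have h2 : ∑ w' : {z : Fin N // z ∈ Kset N b}, (if w' = w then g w' else 0) = g w := by
        rw [Finset.sum_ite_eq' Finset.univ w g]
        simp
      have h1 : ∑ w' : {z : Fin N // z ∈ Kset N b},
          (if ((w' : Fin N) : ℕ) = ((w : Fin N) : ℕ) + 1 then g w' else 0) = 0 := by
        by_cases hex : ∃ w' : {z : Fin N // z ∈ Kset N b}, ((w' : Fin N) : ℕ) = ((w : Fin N) : ℕ) + 1
        · obtain ⟨w'', hw''⟩ := hex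
          rw [Finset.sum_eq_single w'']
          · rw [if_pos hw'']
            exact ih w'' (by omega)
          · intro w' _ hne
            rw [if_neg]
            intro hc
            exact hne (Subtype.ext (Fin.ext (by omega)))
          · intro h; exact absurd (Finset.mem_univ w'') h
        · apply Finset.sum_eq_zero
          intro w' _
          rw [if_neg]
          intro hc
          exact hex ⟨w', hc⟩
      rw [h1, h2] at h0
      linarith
  intro w
  exact aux N w (by omega)

lemma ker_rank (N : ℕ) (b : ℕ → Bool) :
    Module.finrank ℚ (LinearMap.ker (Mx N b).mulVecLin) = (Kset N b).card := by
  classical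
  apply le_antisymm
  · -- upper bound: restriction to Kset coordinates is injective
    set π : (LinearMap.ker (Mx N b).mulVecLin) →ₗ[ℚ] ({z : Fin N // z ∈ Kset N b} → ℚ) :=
      (LinearMap.funLeft ℚ ℚ (fun w : {z : Fin N // z ∈ Kset N b} => (w : Fin N))).comp
        (Submodule.subtype _) with hπ
    have hinj : Function.Injective π := by
      rw [← LinearMap.ker_eq_bot]
      rw [Submodule.eq_bot_iff]
      rintro ⟨x, hxker⟩ hx
      have hx0 : (Mx N b).mulVec x = 0 := hxker
      have hxK : ∀ (w : ℕ) (hw : w < N), 0 < w → b w = true → (b (w-1) = true ∨ w = 1) →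
          x ⟨w, hw⟩ = 0 := by
        intro w hw h1 h2 h3
        have hmem : (⟨w, hw⟩ : Fin N) ∈ Kset N b := mem_Kset.mpr ⟨h1, h2, h3⟩
        have := congrFun (LinearMap.mem_ker.mp hx) ⟨⟨w, hw⟩, hmem⟩
        simpa [hπ] using this
      have := uniq b x hx0 hxK
      exact Subtype.ext this
    calc Module.finrank ℚ (LinearMap.ker (Mx N b).mulVecLin)
        ≤ Module.finrank ℚ ({z : Fin N // z ∈ Kset N b} → ℚ) :=
          LinearMap.finrank_le_finrank_of_injective hinj
      _ = (Kset N b).card := by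
          rw [Module.finrank_fintype_fun_eq_card, Fintype.card_coe]
  · -- lower bound: twin vectors
    set u : {z : Fin N // z ∈ Kset N b} → (LinearMap.ker (Mx N b).mulVecLin) :=
      fun w => ⟨twv b w, by
        rw [LinearMap.mem_ker, Matrix.mulVecLin_apply]
        exact twv_ker b w⟩ with hu
    have hli : LinearIndependent ℚ u := by
      apply LinearIndependent.of_comp (Submodule.subtype _)
      have : (Submodule.subtype (LinearMap.ker (Mx N b).mulVecLin)) ∘ u = twv b := rfl
      rw [this]
      exact twv_li b
    have := hli.fintype_card_le_finrank
    rwa [Fintype.card_coe] at this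


end ThrAux

namespace CountAux


variable (a : ℕ → ℕ)

lemma S_succ (j : ℕ) : S a (j+1) = S a j + a (j+1) := Finset.sum_range_succ _ _

lemma S_one : S a 1 = a 1 := by simp [S]

lemma S_mono (hpos : ∀ i, 1 ≤ a i) : StrictMono (S a) :=
  strictMono_nat_of_lt_succ (fun m => by rw [S_succ]; have := hpos (m+1); omega)

lemma S_ge (hpos : ∀ i, 1 ≤ a i) : ∀ j, j ≤ S a j := by
  intro j
  induction j with
  | zero => omega
  | succ j ih => rw [S_succ]; have := hpos (j+1); omega

lemma bword_iff (hpos : ∀ i, 1 ≤ a i) (k : ℕ) :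
    bword a k = true ↔ ∃ i, S a (2*i+1) ≤ k ∧ k < S a (2*i+2) := by
  rw [bword, decide_eq_true_eq]
  constructor
  · rintro ⟨j, hj1, hj2, hj3, hj4⟩
    obtain ⟨i, rfl⟩ : ∃ i, j = 2*i+1 := ⟨j/2, by omega⟩
    refine ⟨i, hj2, ?_⟩
    have h : 2*i+2 = (2*i+1)+1 := by omega
    rw [h]; exact hj3
  · rintro ⟨i, h1, h2⟩
    refine ⟨2*i+1, by have := S_ge a hpos (2*i+1); omega, h1, ?_, by omega⟩
    have h : (2*i+1)+1 = 2*i+2 := by omega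
    rw [h]; exact h2

lemma count (n : ℕ) (hn : 0 < n) (heven : n % 2 = 0) (hpos : ∀ i, 1 ≤ a i) :
    ((Finset.range (S a n)).filter
      (fun w => 0 < w ∧ bword a w = true ∧ (bword a (w-1) = true ∨ w = 1))).card
    = (if a 1 = 1 then 1 else 0) + ∑ i ∈ Finset.range (n / 2), (a (2 * i + 2) - 1) := by
  have hmono := S_mono a hpos
  have key : ∀ w, (w < S a n ∧ (0 < w ∧ bword a w = true ∧ (bword a (w-1) = true ∨ w = 1)))
      ↔ ((a 1 = 1 ∧ w = 1) ∨ ∃ i, i < n/2 ∧ S a (2*i+1) < w ∧ w < S a (2*i+2)) := by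
    intro w
    constructor
    · rintro ⟨hwN, hw0, hbw, hd⟩
      obtain ⟨i, h1, h2⟩ := (bword_iff a hpos w).mp hbw
      have hin : 2*i+1 < n := by
        by_contra hc
        push_neg at hc
        have := hmono.monotone hc
        omega
      have hi2 : i < n/2 := by omega
      rcases hd with hb1 | h1w
      · obtain ⟨j, g1, g2⟩ := (bword_iff a hpos (w-1)).mp hb1
        rcases Nat.lt_trichotomy i j with hij | hij | hij
        · exfalso
          have := hmono.monotone (show 2*i+2 ≤ 2*j+1 by omega)
          omega
        · subst hij
          exact Or.inr ⟨i, hi2, by omega, h2⟩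
        · exfalso
          have := hmono (show 2*j+2 < 2*i+1 by omega)
          omega
      · left
        have hge := S_ge a hpos (2*i+1)
        have hi0 : i = 0 := by omega
        subst hi0
        norm_num at h1
        have hS1 : S a 1 ≤ 1 := by omega
        have := hpos 1
        rw [S_one] at hS1
        exact ⟨by omega, h1w⟩
    · rintro (⟨ha1, rfl⟩ | ⟨i, hi, h1, h2⟩)
      · have hS1 : S a 1 = 1 := by rw [S_one, ha1]
        have hS2 : S a 2 = 1 + a 2 := by
          have h : (2:ℕ) = 1+1 := rfl
          rw [h, S_succ, hS1]
        have hb1 : bword a 1 = true := by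
          rw [bword_iff a hpos]
          exact ⟨0, by simpa using hS1.le, by have := hpos 2; simp; omega⟩
        have hn2 : 2 ≤ n := by omega
        have := hmono.monotone hn2
        have := hpos 2
        exact ⟨by omega, by omega, hb1, Or.inr rfl⟩
      · have hwn : 2*i+2 ≤ n := by omega
        have hSn := hmono.monotone hwn
        have hge := S_ge a hpos (2*i+1)
        refine ⟨by omega, by omega, (bword_iff a hpos w).mpr ⟨i, by omega, h2⟩,
          Or.inl ((bword_iff a hpos (w-1)).mpr ⟨i, by omega, by omega⟩)⟩
  have hset : (Finset.range (S a n)).filter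
      (fun w => 0 < w ∧ bword a w = true ∧ (bword a (w-1) = true ∨ w = 1))
      = (if a 1 = 1 then ({1} : Finset ℕ) else ∅) ∪
        (Finset.range (n/2)).biUnion (fun i => Finset.Ioo (S a (2*i+1)) (S a (2*i+2))) := by
    ext w
    rw [Finset.mem_filter, Finset.mem_range, Finset.mem_union, Finset.mem_biUnion]
    rw [key w]
    constructor
    · rintro (⟨ha1, rfl⟩ | ⟨i, hi, h1, h2⟩)
      · left; simp [ha1]
      · right; exact ⟨i, Finset.mem_range.mpr hi, Finset.mem_Ioo.mpr ⟨h1, h2⟩⟩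
    · rintro (h | ⟨i, hi, hw⟩)
      · left
        by_cases ha1 : a 1 = 1
        · rw [if_pos ha1] at h; simp at h; exact ⟨ha1, h⟩
        · rw [if_neg ha1] at h; simp at h
      · right
        exact ⟨i, Finset.mem_range.mp hi, (Finset.mem_Ioo.mp hw).1, (Finset.mem_Ioo.mp hw).2⟩
  rw [hset]
  have hdisj : Disjoint (if a 1 = 1 then ({1} : Finset ℕ) else ∅)
      ((Finset.range (n/2)).biUnion (fun i => Finset.Ioo (S a (2*i+1)) (S a (2*i+2)))) := by
    rw [Finset.disjoint_left]
    intro w hw2 hw1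
    have hw1' := Finset.mem_biUnion.mp hw1
    obtain ⟨i, hi, hw⟩ := hw1'
    rw [Finset.mem_Ioo] at hw
    have := S_ge a hpos (2*i+1)
    have hwge : 2 ≤ w := by omega
    by_cases ha1 : a 1 = 1
    · rw [if_pos ha1] at hw2; simp at hw2; omega
    · rw [if_neg ha1] at hw2; simp at hw2
  rw [Finset.card_union_of_disjoint hdisj]
  congr 1
  · by_cases ha1 : a 1 = 1 <;> simp [ha1]
  · rw [Finset.card_biUnion]
    · apply Finset.sum_congr rfl
      intro i _
      rw [Nat.card_Ioo]
      have h : 2*i+2 = (2*i+1)+1 := by omega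
      rw [h, S_succ]
      omega
    · intro i hi j hj hij
      rw [Function.onFun, Finset.disjoint_left]
      intro w hwi hwj
      rw [Finset.mem_Ioo] at hwi hwj
      rcases Nat.lt_or_ge i j with h | h
      · have := hmono.monotone (show 2*i+2 ≤ 2*j+1 by omega)
        omega
      · have hji : j < i := by omega
        have := hmono.monotone (show 2*j+2 ≤ 2*i+1 by omega)
        omega


end CountAux

theorem stmt6 (a : ℕ → ℕ) (n : ℕ) (hn : 0 < n) (heven : n % 2 = 0)
    (hpos : ∀ i, 1 ≤ a i) :
    Module.finrank ℚ (LinearMap.ker ((blockGraph a n).adjMatrix ℚ + 1).mulVecLin) =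
      (if a 1 = 1 then 1 else 0) + ∑ i ∈ Finset.range (n / 2), (a (2 * i + 2) - 1) := by
  have hmx : (blockGraph a n).adjMatrix ℚ + 1 = ThrAux.Mx (S a n) (bword a) := rfl
  rw [hmx, ThrAux.ker_rank]
  have hcard : (ThrAux.Kset (S a n) (bword a)).card = ((Finset.range (S a n)).filter
      (fun w => 0 < w ∧ bword a w = true ∧ (bword a (w-1) = true ∨ w = 1))).card := by
    apply Finset.card_bij (fun (w : Fin (S a n)) (_ : w ∈ ThrAux.Kset (S a n) (bword a)) => (w : ℕ))
    · intro w hw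
      rw [Finset.mem_filter, Finset.mem_range]
      exact ⟨w.isLt, ThrAux.mem_Kset.mp hw⟩
    · intro a1 ha1 a2 ha2 h
      exact Fin.ext h
    · intro w hw
      rw [Finset.mem_filter, Finset.mem_range] at hw
      exact ⟨⟨w, hw.1⟩, ThrAux.mem_Kset.mpr hw.2, rfl⟩
  rw [hcard, CountAux.count a n hn heven hpos]
end

section
/- Let G = (0^{a_1} 1^{a_2} ... 0^{a_{n-1}} 1^{a_n}) be a connected threshold graph, and let H be the quotient (divisor) of G with respect to the partition of its vertex set into the n blocks V_1,...,V_n of sizes a_1,...,a_n given by the construction sequence. Then every eigenvalue λ of the adjacency matrix of G with λ ∉ {0, -1} is an eigenvalue of the n×n quotient matrix D of H, where D_{ij} is the number of neighbors in V_j of any vertex of V_i. -/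
/-- The quotient (divisor) matrix `D` of the equitable partition of the threshold graph
`(0^{a 1} 1^{a 2} ⋯ 1^{a n})` into its `n` blocks (1-indexed rows/columns):
`D i j` is the number of neighbors in block `j` of any vertex of block `i`. -/
def Dmat (a : ℕ → ℕ) (n : ℕ) : Matrix (Fin n) (Fin n) ℤ :=
  Matrix.of fun i j =>
    if (i : ℕ) = (j : ℕ) then
      (if ((i : ℕ) + 1) % 2 = 0 then (a ((i : ℕ) + 1) : ℤ) - 1 else 0)
    else if (j : ℕ) < (i : ℕ) then
      (if ((i : ℕ) + 1) % 2 = 0 then (a ((j : ℕ) + 1) : ℤ) else 0)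
    else
      (if ((j : ℕ) + 1) % 2 = 0 then (a ((j : ℕ) + 1) : ℤ) else 0)

namespace Thm14Aux

variable {a : ℕ → ℕ}

lemma S_succ (a : ℕ → ℕ) (m : ℕ) : S a (m + 1) = S a m + a (m + 1) :=
  Finset.sum_range_succ _ _

lemma S_mono (a : ℕ → ℕ) : Monotone (S a) :=
  monotone_nat_of_le_succ fun m => by rw [S_succ]; omega

lemma S_lt_succ (hpos : ∀ i, 1 ≤ a i) (m : ℕ) : S a m < S a (m + 1) := by
  have := hpos (m + 1); rw [S_succ]; omega

lemma le_S (hpos : ∀ i, 1 ≤ a i) (m : ℕ) : m ≤ S a m := by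
  induction m with
  | zero => simp [S]
  | succ k ih => have := hpos (k + 1); rw [S_succ]; omega

lemma exists_blk (hpos : ∀ i, 1 ≤ a i) (k : ℕ) : ∃ j, k < S a (j + 1) :=
  ⟨k, lt_of_lt_of_le (Nat.lt_succ_self k) (le_S hpos (k + 1))⟩

/-- The (0-indexed) block of vertex `k`. -/
def blk (hpos : ∀ i, 1 ≤ a i) (k : ℕ) : ℕ := Nat.find (exists_blk hpos k)

lemma lt_S_blk_succ (hpos : ∀ i, 1 ≤ a i) (k : ℕ) : k < S a (blk hpos k + 1) :=
  Nat.find_spec (exists_blk hpos k)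

lemma S_blk_le (hpos : ∀ i, 1 ≤ a i) (k : ℕ) : S a (blk hpos k) ≤ k := by
  rcases h : blk hpos k with _ | m
  · simp [S]
  · have h2 := Nat.find_min (exists_blk hpos k) (show m < blk hpos k by omega)
    simp only [not_lt] at h2
    omega

lemma blk_eq_of (hpos : ∀ i, 1 ≤ a i) {k j : ℕ} (h1 : S a j ≤ k) (h2 : k < S a (j + 1)) :
    blk hpos k = j := by
  have hle : blk hpos k ≤ j := Nat.find_min' _ h2
  rcases hle.lt_or_eq with hlt | he
  · have h3 := S_mono a (show blk hpos k + 1 ≤ j by omega)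
    have h4 := lt_S_blk_succ hpos k
    omega
  · exact he

lemma blk_lt (hpos : ∀ i, 1 ≤ a i) {n k : ℕ} (h : k < S a n) : blk hpos k < n := by
  by_contra hc
  push_neg at hc
  have := S_mono a hc
  have := S_blk_le hpos k
  omega

lemma bword_eq (hpos : ∀ i, 1 ≤ a i) (k : ℕ) :
    bword a k = decide ((blk hpos k + 1) % 2 = 0) := by
  simp only [bword, decide_eq_decide]
  constructor
  · rintro ⟨j, _, h2, h3, h4⟩
    rwa [blk_eq_of hpos h2 h3]
  · intro hpar
    refine ⟨blk hpos k, ?_, S_blk_le hpos k, lt_S_blk_succ hpos k, hpar⟩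
    have h1 := le_S hpos (blk hpos k)
    have h2 := S_blk_le hpos k
    omega

lemma lt_of_blk_lt (hpos : ∀ i, 1 ≤ a i) {x u : ℕ}
    (h : blk hpos x < blk hpos u) : x < u :=
  calc x < S a (blk hpos x + 1) := lt_S_blk_succ hpos x
    _ ≤ S a (blk hpos u) := S_mono a (Nat.succ_le_of_lt h)
    _ ≤ u := S_blk_le hpos u

/-- Block of a vertex, as an element of `Fin n`. -/
def blkF (hpos : ∀ i, 1 ≤ a i) (n : ℕ) (x : Fin (S a n)) : Fin n :=
  ⟨blk hpos (x : ℕ), blk_lt hpos x.isLt⟩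

/-- First vertex of block `j`. -/
def fv (hpos : ∀ i, 1 ≤ a i) (n : ℕ) (j : Fin n) : Fin (S a n) :=
  ⟨S a (j : ℕ), lt_of_lt_of_le (S_lt_succ hpos (j : ℕ)) (S_mono a (Nat.succ_le_of_lt j.isLt))⟩

lemma blk_fv (hpos : ∀ i, 1 ≤ a i) (n : ℕ) (j : Fin n) :
    blk hpos ((fv hpos n j : Fin (S a n)) : ℕ) = (j : ℕ) :=
  blk_eq_of hpos le_rfl (S_lt_succ hpos (j : ℕ))

lemma mem_fiber (hpos : ∀ i, 1 ≤ a i) (n : ℕ) (j : Fin n) (x : Fin (S a n)) :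
    x ∈ Finset.univ.filter (fun y => blkF hpos n y = j) ↔ blk hpos (x : ℕ) = (j : ℕ) := by
  simp [blkF, Fin.ext_iff]

lemma card_fiber (hpos : ∀ i, 1 ≤ a i) (n : ℕ) (j : Fin n) :
    (Finset.univ.filter (fun y : Fin (S a n) => blkF hpos n y = j)).card = a ((j : ℕ) + 1) := by
  have key : (Finset.univ.filter (fun y : Fin (S a n) => blkF hpos n y = j)).card
      = (Finset.Ico (S a (j : ℕ)) (S a ((j : ℕ) + 1))).card := by
    refine Finset.card_bij' (fun x _ => (x : ℕ))
      (fun m hm => (⟨m, ?_⟩ : Fin (S a n))) ?_ ?_ ?_ ?_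
    · exact lt_of_lt_of_le (Finset.mem_Ico.mp hm).2 (S_mono a (Nat.succ_le_of_lt j.isLt))
    · intro x hx
      rw [mem_fiber] at hx
      rw [Finset.mem_Ico]
      exact ⟨hx ▸ S_blk_le hpos (x : ℕ), hx ▸ lt_S_blk_succ hpos (x : ℕ)⟩
    · intro m hm
      rw [Finset.mem_Ico] at hm
      rw [mem_fiber]
      exact blk_eq_of hpos hm.1 hm.2
    · intro x _; rfl
    · intro m _; rfl
  rw [key, Nat.card_Ico, S_succ]
  omega

end Thm14Aux

open Matrix Thm14Aux in
/-- Every eigenvalue of the threshold graph distinct from `0` and `-1` is an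
eigenvalue of the quotient matrix `D` of its divisor. -/
theorem stmt14 (a : ℕ → ℕ) (n : ℕ) (hn : 0 < n) (hne : n % 2 = 0)
    (hpos : ∀ i, 1 ≤ a i) (lam : ℝ) (h0 : lam ≠ 0) (h1 : lam ≠ -1)
    (h : ((blockGraph a n).adjMatrix ℝ - lam • 1).det = 0) :
    (((Dmat a n).map (Int.cast : ℤ → ℝ)) - lam • 1).det = 0 := by
  obtain ⟨v, hv0, hv⟩ := Matrix.exists_mulVec_eq_zero_iff.mpr h
  have hadj : ∀ u x : Fin (S a n), (blockGraph a n).Adj u x ↔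
      (((u : ℕ) < (x : ℕ) ∧ bword a (x : ℕ) = true) ∨
       ((x : ℕ) < (u : ℕ) ∧ bword a (u : ℕ) = true)) := fun _ _ => Iff.rfl
  -- the eigenvalue equation, coordinatewise
  have hAv : ∀ u, ((blockGraph a n).adjMatrix ℝ *ᵥ v) u = lam * v u := by
    intro u
    have h' := congrFun hv u
    simp only [Matrix.sub_mulVec, Matrix.smul_mulVec, Matrix.one_mulVec,
      Pi.sub_apply, Pi.smul_apply, smul_eq_mul, Pi.zero_apply] at h'
    linarith
  have heig : ∀ u, ∑ x ∈ (blockGraph a n).neighborFinset u, v x = lam * v u := fun u => by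
    rw [← SimpleGraph.adjMatrix_mulVec_apply]; exact hAv u
  -- the eigenvector is constant on blocks
  have hsame : ∀ u w : Fin (S a n),
      blk hpos (u : ℕ) = blk hpos (w : ℕ) → v u = v w := by
    intro u w hblk
    by_cases huw : u = w
    · rw [huw]
    have hb : bword a (u : ℕ) = bword a (w : ℕ) := by
      rw [bword_eq hpos, bword_eq hpos, hblk]
    have hout : ∀ x : Fin (S a n), x ≠ u → x ≠ w →
        ((blockGraph a n).Adj u x ↔ (blockGraph a n).Adj w x) := by
      intro x hxu hxw
      have hxu' : (x : ℕ) ≠ (u : ℕ) := fun hh => hxu (Fin.ext hh)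
      have hxw' : (x : ℕ) ≠ (w : ℕ) := fun hh => hxw (Fin.ext hh)
      rw [hadj, hadj, hb]
      rcases lt_trichotomy (blk hpos (x : ℕ)) (blk hpos (u : ℕ)) with hlt | heq | hgt
      · have h1' : (x : ℕ) < (u : ℕ) := lt_of_blk_lt hpos hlt
        have h2' : (x : ℕ) < (w : ℕ) := lt_of_blk_lt hpos (hblk ▸ hlt)
        have h3' : ¬ ((u : ℕ) < (x : ℕ)) := by omega
        have h4' : ¬ ((w : ℕ) < (x : ℕ)) := by omega
        constructor
        · rintro (⟨h5, _⟩ | ⟨_, h6⟩)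
          · exact absurd h5 h3'
          · exact Or.inr ⟨h2', h6⟩
        · rintro (⟨h5, _⟩ | ⟨_, h6⟩)
          · exact absurd h5 h4'
          · exact Or.inr ⟨h1', h6⟩
      · have hbx : bword a (x : ℕ) = bword a (w : ℕ) := by
          rw [bword_eq hpos, bword_eq hpos, heq, hblk]
        rw [hbx]
        have h1' : (u : ℕ) < (x : ℕ) ∨ (x : ℕ) < (u : ℕ) := by omega
        have h2' : (w : ℕ) < (x : ℕ) ∨ (x : ℕ) < (w : ℕ) := by omega
        constructor
        · rintro (⟨_, h6⟩ | ⟨_, h6⟩) <;>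
            · rcases h2' with hh | hh
              · exact Or.inl ⟨hh, h6⟩
              · exact Or.inr ⟨hh, h6⟩
        · rintro (⟨_, h6⟩ | ⟨_, h6⟩) <;>
            · rcases h1' with hh | hh
              · exact Or.inl ⟨hh, h6⟩
              · exact Or.inr ⟨hh, h6⟩
      · have h1' : (u : ℕ) < (x : ℕ) := lt_of_blk_lt hpos hgt
        have h2' : (w : ℕ) < (x : ℕ) := lt_of_blk_lt hpos (hblk ▸ hgt)
        have h3' : ¬ ((x : ℕ) < (u : ℕ)) := by omega
        have h4' : ¬ ((x : ℕ) < (w : ℕ)) := by omega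
        constructor
        · rintro (⟨_, h6⟩ | ⟨h5, _⟩)
          · exact Or.inl ⟨h2', h6⟩
          · exact absurd h5 h3'
        · rintro (⟨_, h6⟩ | ⟨h5, _⟩)
          · exact Or.inl ⟨h1', h6⟩
          · exact absurd h5 h4'
    rcases Bool.eq_false_or_eq_true (bword a (u : ℕ)) with hbu | hbu
    · -- even block: `lam ≠ -1` forces equality
      have hbw : bword a (w : ℕ) = true := by rw [← hb]; exact hbu
      have huw' : (u : ℕ) ≠ (w : ℕ) := fun hh => huw (Fin.ext hh)
      have haduw : (blockGraph a n).Adj u w := by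
        rw [hadj]
        rcases lt_or_gt_of_ne huw' with hlt | hgt
        · exact Or.inl ⟨hlt, hbw⟩
        · exact Or.inr ⟨hgt, hbu⟩
      have hErase : ((blockGraph a n).neighborFinset u).erase w
          = ((blockGraph a n).neighborFinset w).erase u := by
        ext x
        simp only [Finset.mem_erase, SimpleGraph.mem_neighborFinset]
        constructor
        · rintro ⟨hxw, hx⟩
          have hxu : x ≠ u := fun hh => (blockGraph a n).irrefl (hh ▸ hx)
          exact ⟨hxu, (hout x hxu hxw).mp hx⟩
        · rintro ⟨hxu, hx⟩
          have hxw : x ≠ w := fun hh => (blockGraph a n).irrefl (hh ▸ hx)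
          exact ⟨hxw, (hout x hxu hxw).mpr hx⟩
      have hmemw : w ∈ (blockGraph a n).neighborFinset u :=
        (SimpleGraph.mem_neighborFinset _ _ _).mpr haduw
      have hmemu : u ∈ (blockGraph a n).neighborFinset w :=
        (SimpleGraph.mem_neighborFinset _ _ _).mpr haduw.symm
      have e1 : v w + ∑ x ∈ ((blockGraph a n).neighborFinset u).erase w, v x = lam * v u := by
        rw [Finset.add_sum_erase _ _ hmemw]; exact heig u
      have e2 : v u + ∑ x ∈ ((blockGraph a n).neighborFinset w).erase u, v x = lam * v w := by
        rw [Finset.add_sum_erase _ _ hmemu]; exact heig w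
      rw [hErase] at e1
      have hkey : (lam + 1) * (v u - v w) = 0 := by linarith
      rcases mul_eq_zero.mp hkey with hc | hc
      · exact absurd (by linarith : lam = -1) h1
      · linarith
    · -- odd block: identical neighborhoods, `lam ≠ 0` forces equality
      have hbw : bword a (w : ℕ) = false := by rw [← hb]; exact hbu
      have hN : (blockGraph a n).neighborFinset u = (blockGraph a n).neighborFinset w := by
        ext x
        simp only [SimpleGraph.mem_neighborFinset]
        by_cases hxu : x = u
        · subst hxu
          constructor
          · intro hc; exact absurd hc (blockGraph a n).irrefl
          · intro hc
            rw [hadj] at hc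
            rcases hc with ⟨_, hc2⟩ | ⟨_, hc2⟩
            · rw [hbu] at hc2; exact absurd hc2 (by simp)
            · rw [hbw] at hc2; exact absurd hc2 (by simp)
        · by_cases hxw : x = w
          · subst hxw
            constructor
            · intro hc
              rw [hadj] at hc
              rcases hc with ⟨_, hc2⟩ | ⟨_, hc2⟩
              · rw [hbw] at hc2; exact absurd hc2 (by simp)
              · rw [hbu] at hc2; exact absurd hc2 (by simp)
            · intro hc; exact absurd hc (blockGraph a n).irrefl
          · exact hout x hxu hxw
      have e1 := heig u
      have e2 := heig w
      rw [hN, e2] at e1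
      have : lam * (v w - v u) = 0 := by ring_nf; linarith
      rcases mul_eq_zero.mp this with hc | hc
      · exact absurd hc h0
      · linarith
  -- the quotient eigenvector
  have hblkfv : ∀ x : Fin (S a n), v x = v (fv hpos n (blkF hpos n x)) := by
    intro x
    exact hsame x _ (by rw [blk_fv]; rfl)
  -- the main quotient eigenvalue equation
  have hmain : ∀ i : Fin n,
      ∑ j : Fin n, ((Dmat a n i j : ℤ) : ℝ) * v (fv hpos n j) = lam * v (fv hpos n i) := by
    intro i
    set u := fv hpos n i with hu
    have hbu : blk hpos (u : ℕ) = (i : ℕ) := blk_fv hpos n i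
    have hbuF : blkF hpos n u = i := Fin.ext hbu
    have hsum : ((blockGraph a n).adjMatrix ℝ *ᵥ v) u
        = ∑ x : Fin (S a n), (blockGraph a n).adjMatrix ℝ u x * v x := by
      simp [Matrix.mulVec, dotProduct]
    have hfib := Finset.sum_fiberwise (Finset.univ : Finset (Fin (S a n)))
      (blkF hpos n) (fun x => (blockGraph a n).adjMatrix ℝ u x * v x)
    rw [← hAv u, hsum, ← hfib]
    refine Finset.sum_congr rfl ?_
    intro j _
    have hconst : ∀ x ∈ Finset.univ.filter (fun y : Fin (S a n) => blkF hpos n y = j),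
        (blockGraph a n).adjMatrix ℝ u x * v x
          = (blockGraph a n).adjMatrix ℝ u x * v (fv hpos n j) := by
      intro x hx
      rw [Finset.mem_filter] at hx
      rw [hblkfv x, hx.2]
    rw [Finset.sum_congr rfl hconst, ← Finset.sum_mul]
    congr 1
    -- counting neighbors of u in block j
    simp only [SimpleGraph.adjMatrix_apply]
    rw [Finset.sum_boole]
    have hmemiff : ∀ x : Fin (S a n),
        x ∈ Finset.univ.filter (fun y : Fin (S a n) => blkF hpos n y = j)
          ↔ blk hpos (x : ℕ) = (j : ℕ) := mem_fiber hpos n j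
    rcases lt_trichotomy ((j : ℕ)) ((i : ℕ)) with hji | hji | hji
    · -- earlier block: adjacency iff block i is dominating
      have hxlt : ∀ x ∈ Finset.univ.filter (fun y : Fin (S a n) => blkF hpos n y = j),
          (x : ℕ) < (u : ℕ) := by
        intro x hx
        rw [hmemiff] at hx
        exact lt_of_blk_lt hpos (by rw [hx, hbu]; exact hji)
      by_cases hpar : ((i : ℕ) + 1) % 2 = 0
      · have hall : ∀ x ∈ Finset.univ.filter (fun y : Fin (S a n) => blkF hpos n y = j),
            (blockGraph a n).Adj u x := by
          intro x hx
          rw [hadj]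
          exact Or.inr ⟨hxlt x hx, by rw [bword_eq hpos, hbu]; simpa using hpar⟩
        rw [Finset.filter_true_of_mem hall, card_fiber hpos n j]
        have hDv : Dmat a n i j = (a ((j : ℕ) + 1) : ℤ) := by
          simp only [Dmat, Matrix.of_apply, if_neg (show ¬ ((i:ℕ) = (j:ℕ)) by omega),
            if_pos hji, if_pos hpar]
        rw [hDv]; push_cast; ring
      · have hnone : ∀ x ∈ Finset.univ.filter (fun y : Fin (S a n) => blkF hpos n y = j),
            ¬ (blockGraph a n).Adj u x := by
          intro x hx hc
          rw [hadj] at hc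
          have hbuf : bword a (u : ℕ) = false := by
            rw [bword_eq hpos, hbu]; simpa using hpar
          rcases hc with ⟨hc1, _⟩ | ⟨_, hc2⟩
          · have := hxlt x hx; omega
          · rw [hbuf] at hc2; exact absurd hc2 (by simp)
        rw [Finset.filter_false_of_mem hnone]
        have hDv : Dmat a n i j = 0 := by
          simp only [Dmat, Matrix.of_apply, if_neg (show ¬ ((i:ℕ) = (j:ℕ)) by omega),
            if_pos hji, if_neg hpar]
        rw [hDv]; simp
    · -- same block
      have hjieq : j = i := Fin.ext hji
      subst hjieq
      by_cases hpar : ((j : ℕ) + 1) % 2 = 0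
      · have hbut : bword a (u : ℕ) = true := by
          rw [bword_eq hpos, hbu]; simpa using hpar
        have hfe : (Finset.univ.filter (fun y : Fin (S a n) => blkF hpos n y = j)).filter
            (fun x => (blockGraph a n).Adj u x)
            = (Finset.univ.filter (fun y : Fin (S a n) => blkF hpos n y = j)).erase u := by
          ext x
          rw [Finset.mem_erase, Finset.mem_filter]
          constructor
          · rintro ⟨hx1, hx2⟩
            exact ⟨fun hh => (blockGraph a n).irrefl (hh ▸ hx2), hx1⟩
          · rintro ⟨hx1, hx2⟩
            refine ⟨hx2, ?_⟩
            rw [hadj]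
            have hbxt : bword a (x : ℕ) = true := by
              rw [bword_eq hpos, (hmemiff x).mp hx2]
              rw [bword_eq hpos, hbu] at hbut
              simpa using hbut
            have hne : (x : ℕ) ≠ (u : ℕ) := fun hh => hx1 (Fin.ext hh)
            rcases lt_or_gt_of_ne hne with hlt | hgt
            · exact Or.inr ⟨hlt, hbut⟩
            · exact Or.inl ⟨hgt, hbxt⟩
        rw [hfe, Finset.card_erase_of_mem ((hmemiff u).mpr hbu), card_fiber hpos n j]
        have h1a := hpos ((j : ℕ) + 1)
        simp only [Dmat, Matrix.of_apply, if_pos rfl, if_pos hpar]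
        push_cast [Nat.cast_sub h1a]
        ring
      · have hbuf : bword a (u : ℕ) = false := by
          rw [bword_eq hpos, hbu]; simpa using hpar
        have hnone : ∀ x ∈ Finset.univ.filter (fun y : Fin (S a n) => blkF hpos n y = j),
            ¬ (blockGraph a n).Adj u x := by
          intro x hx hc
          rw [hadj] at hc
          have hbxf : bword a (x : ℕ) = false := by
            rw [bword_eq hpos, (hmemiff x).mp hx]; simpa using hpar
          rcases hc with ⟨_, hc2⟩ | ⟨_, hc2⟩
          · rw [hbxf] at hc2; exact absurd hc2 (by simp)
          · rw [hbuf] at hc2; exact absurd hc2 (by simp)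
        rw [Finset.filter_false_of_mem hnone]
        have hDv : Dmat a n j j = 0 := by
          simp only [Dmat, Matrix.of_apply, if_pos rfl, if_neg hpar]; simp
        rw [hDv]; simp
    · -- later block: adjacency iff block j is dominating
      have hxgt : ∀ x ∈ Finset.univ.filter (fun y : Fin (S a n) => blkF hpos n y = j),
          (u : ℕ) < (x : ℕ) := by
        intro x hx
        rw [hmemiff] at hx
        exact lt_of_blk_lt hpos (by rw [hx, hbu]; exact hji)
      by_cases hpar : ((j : ℕ) + 1) % 2 = 0
      · have hall : ∀ x ∈ Finset.univ.filter (fun y : Fin (S a n) => blkF hpos n y = j),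
            (blockGraph a n).Adj u x := by
          intro x hx
          rw [hadj]
          refine Or.inl ⟨hxgt x hx, ?_⟩
          rw [bword_eq hpos, (hmemiff x).mp hx]; simpa using hpar
        rw [Finset.filter_true_of_mem hall, card_fiber hpos n j]
        have hDv : Dmat a n i j = (a ((j : ℕ) + 1) : ℤ) := by
          simp only [Dmat, Matrix.of_apply, if_neg (show ¬ ((i:ℕ) = (j:ℕ)) by omega),
            if_neg (show ¬ ((j:ℕ) < (i:ℕ)) by omega), if_pos hpar]
        rw [hDv]; push_cast; ring
      · have hnone : ∀ x ∈ Finset.univ.filter (fun y : Fin (S a n) => blkF hpos n y = j),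
            ¬ (blockGraph a n).Adj u x := by
          intro x hx hc
          rw [hadj] at hc
          have hbxf : bword a (x : ℕ) = false := by
            rw [bword_eq hpos, (hmemiff x).mp hx]; simpa using hpar
          rcases hc with ⟨_, hc2⟩ | ⟨hc1, _⟩
          · rw [hbxf] at hc2; exact absurd hc2 (by simp)
          · have := hxgt x hx; omega
        rw [Finset.filter_false_of_mem hnone]
        have hDv : Dmat a n i j = 0 := by
          simp only [Dmat, Matrix.of_apply, if_neg (show ¬ ((i:ℕ) = (j:ℕ)) by omega),
            if_neg (show ¬ ((j:ℕ) < (i:ℕ)) by omega), if_neg hpar]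
        rw [hDv]; simp
  -- conclude
  rw [← Matrix.exists_mulVec_eq_zero_iff]
  refine ⟨fun j => v (fv hpos n j), ?_, ?_⟩
  · intro hc
    exact hv0 (funext fun x => by rw [hblkfv x]; exact congrFun hc _)
  · funext i
    have hD : (((Dmat a n).map (Int.cast : ℤ → ℝ)) *ᵥ fun j => v (fv hpos n j)) i
        = ∑ j : Fin n, ((Dmat a n i j : ℤ) : ℝ) * v (fv hpos n j) := by
      simp [Matrix.mulVec, dotProduct, Matrix.map_apply]
    simp only [Matrix.sub_mulVec, Pi.sub_apply, Matrix.smul_mulVec, Pi.smul_apply,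
      Matrix.one_mulVec, smul_eq_mul, Pi.zero_apply]
    rw [hD, hmain i]
    ring
end
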